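/- arXiv:math/0412158 — 8 statements merged into one kernel-verified Lean document; each statement's English description precedes it below -/
import Mathlib

section
/- The 2-transformation S : [0,1] → [0,1] defined by S(x) = {2x, 1−2x} for x ∈ [0,1/2] and S(x) = {2x−1} for x ∈ (1/2,1] preserves Lebesgue measure λ. -/
open MeasureTheory Set Filter Finset
open scoped ENNReal Classical

noncomputable section

/-- The stochastic kernel of a finite-multivalued transformation `S`:
`K(x,B) = |S(x) ∩ B| / |S(x)|`, valued in `ℝ≥0∞`. -/
def fker {X : Type*} (S : X → Finset X) (x : X) (B : Set X) : ℝ≥0∞ :=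
  (((S x).filter (fun y => y ∈ B)).card : ℝ≥0∞) / ((S x).card : ℝ≥0∞)

/-- The set `S⁻¹_{k;l}(B) = {x : |S(x)| = k, |S(x) ∩ B| = l}`. -/
def preimKL {X : Type*} (S : X → Finset X) (k l : ℕ) (B : Set X) : Set X :=
  {x | (S x).card = k ∧ ((S x).filter (fun y => y ∈ B)).card = l}

/-- The full preimage `S⁻¹(B) = {x : S(x) ∩ B ≠ ∅}`. -/
def fullPre {X : Type*} (S : X → Finset X) (B : Set X) : Set X :=
  {x | ∃ y ∈ S x, y ∈ B}

/-- The Koopman operator `Uf(x) = (1/|S(x)|) ∑_{y ∈ S(x)} f(y)`. -/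
def koop {X : Type*} (S : X → Finset X) (f : X → ℝ) (x : X) : ℝ :=
  (∑ y ∈ S x, f y) / ((S x).card : ℝ)

/-! On `[0, 1/2]` the kernel averages the indicators of `B` at the two branches `2x` and `1 - 2x`,
and on `(1/2, 1]` it is the indicator of `B` at `2x - 1`. Each of these three affine branches
carries its interval onto `[0, 1]` with slope `±2`, so each integrates to `λ(B ∩ [0, 1]) / 2`;
with weights `1/2, 1/2, 1` they add up to `λ(B ∩ [0, 1])`. -/

lemma fker_of_eq_pair {X : Type*} {S : X → Finset X} {x u v : X} (h : S x = {u, v})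
    (B : Set X) : fker S x B = (B.indicator 1 u + B.indicator 1 v) / 2 := by
  rw [fker, h]
  by_cases huv : u = v
  · subst huv
    rw [Finset.pair_eq_singleton, Finset.filter_singleton]
    by_cases hu : u ∈ B <;> simp [hu, one_add_one_eq_two, ENNReal.div_self]
  · rw [Finset.card_pair huv, Finset.filter_insert, Finset.filter_singleton]
    by_cases hu : u ∈ B <;> by_cases hv : v ∈ B <;> simp [hu, hv, huv, one_add_one_eq_two]

lemma fker_of_eq_singleton {X : Type*} {S : X → Finset X} {x u : X} (h : S x = {u})
    (B : Set X) : fker S x B = B.indicator 1 u := by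
  rw [fker, h, Finset.filter_singleton]
  by_cases hu : u ∈ B <;> simp [hu]

lemma volume_preimage_affine {a : ℝ} (ha : a ≠ 0) (b : ℝ) (s : Set ℝ) :
    volume ((fun x => a * x + b) ⁻¹' s) = ENNReal.ofReal |a⁻¹| * volume s := by
  rw [show (fun x : ℝ => a * x + b) = (b + ·) ∘ (a * ·) by ext; simp [add_comm],
    preimage_comp, Real.volume_preimage_mul_left ha, measure_preimage_add]

lemma setLIntegral_indicator_affine {a : ℝ} (ha : a ≠ 0) (b : ℝ) {B : Set ℝ}
    (hB : MeasurableSet B) (t : Set ℝ) :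
    ∫⁻ x in (fun x => a * x + b) ⁻¹' t, B.indicator 1 (a * x + b) =
      ENNReal.ofReal |a⁻¹| * volume.restrict t B := by
  have hf : Measurable fun x : ℝ => a * x + b := by fun_prop
  simp_rw [← Set.indicator_comp_right (g := (1 : ℝ → ℝ≥0∞)) (fun x => a * x + b),
    Pi.one_comp]
  rw [lintegral_indicator_one (hB.preimage hf), Measure.restrict_apply (hB.preimage hf),
    ← preimage_inter, volume_preimage_affine ha, Measure.restrict_apply hB]

lemma ofReal_abs_inv_two : ENNReal.ofReal |(2 : ℝ)⁻¹| = 2⁻¹ := by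
  rw [abs_of_pos (by norm_num), ENNReal.ofReal_inv_of_pos two_pos, ENNReal.ofReal_ofNat]

lemma ofReal_abs_inv_neg_two : ENNReal.ofReal |(-2 : ℝ)⁻¹| = 2⁻¹ := by
  rw [inv_neg, abs_neg, ofReal_abs_inv_two]

def twoTransformation (x : ℝ) : Finset ℝ :=
  if x ≤ 1 / 2 then {2 * x, 1 - 2 * x} else {2 * x - 1}

lemma twoTransformation_of_le {x : ℝ} (hx : x ≤ 1 / 2) :
    twoTransformation x = {2 * x, 1 - 2 * x} :=
  if_pos hx

lemma twoTransformation_of_lt {x : ℝ} (hx : 1 / 2 < x) : twoTransformation x = {2 * x - 1} :=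
  if_neg hx.not_ge

lemma setLIntegral_fker_twoTransformation_Icc {B : Set ℝ} (hB : MeasurableSet B) :
    ∫⁻ x in Icc 0 (1 / 2), fker twoTransformation x B = volume.restrict (Icc 0 1) B / 2 := by
  have hmeas : Measurable fun x : ℝ => B.indicator (1 : ℝ → ℝ≥0∞) (2 * x + 0) :=
    (measurable_one.indicator hB).comp (by fun_prop)
  have hpos : Icc (0 : ℝ) (1 / 2) = (fun x => 2 * x + 0) ⁻¹' Icc 0 1 := by
    ext x
    simp only [Set.mem_Icc, Set.mem_preimage]
    constructor <;> intro h <;> constructor <;> linarith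
  have hneg : Icc (0 : ℝ) (1 / 2) = (fun x => -2 * x + 1) ⁻¹' Icc 0 1 := by
    ext x
    simp only [Set.mem_Icc, Set.mem_preimage]
    constructor <;> intro h <;> constructor <;> linarith
  rw [setLIntegral_congr_fun measurableSet_Icc (g := fun x =>
      (B.indicator 1 (2 * x + 0) + B.indicator 1 (-2 * x + 1)) * 2⁻¹) fun x hx => by
    rw [fker_of_eq_pair (twoTransformation_of_le hx.2), div_eq_mul_inv]; congr 4 <;> ring]
  rw [lintegral_mul_const' _ _ (by norm_num), lintegral_add_left hmeas]
  nth_rw 1 [hpos]; rw [hneg]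
  rw [setLIntegral_indicator_affine two_ne_zero _ hB,
    setLIntegral_indicator_affine (by norm_num) _ hB, ofReal_abs_inv_two, ofReal_abs_inv_neg_two,
    ← add_mul, ENNReal.inv_two_add_inv_two, one_mul, div_eq_mul_inv]

lemma setLIntegral_fker_twoTransformation_Ioc {B : Set ℝ} (hB : MeasurableSet B) :
    ∫⁻ x in Ioc (1 / 2) 1, fker twoTransformation x B = volume.restrict (Icc 0 1) B / 2 := by
  have hpre : Ioc (1 / 2 : ℝ) 1 = (fun x => 2 * x + -1) ⁻¹' Ioc 0 1 := by
    ext x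
    simp only [Set.mem_Ioc, Set.mem_preimage]
    constructor <;> intro h <;> constructor <;> linarith
  rw [setLIntegral_congr_fun measurableSet_Ioc (g := fun x => B.indicator 1 (2 * x + -1))
      fun x hx => by rw [fker_of_eq_singleton (twoTransformation_of_lt hx.1), sub_eq_add_neg]]
  rw [hpre, setLIntegral_indicator_affine two_ne_zero _ hB,
    Measure.restrict_congr_set Ioc_ae_eq_Icc, ofReal_abs_inv_two, ENNReal.div_eq_inv_mul]

/-- `S(x) = {2x, 1-2x}` on `[0,1/2]`, `S(x) = {2x-1}` on `(1/2,1]`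
preserves Lebesgue measure on `[0,1]`. -/
theorem ex2_preserving :
    ∀ B : Set ℝ, MeasurableSet B →
      ∫⁻ x, fker (fun x : ℝ =>
          if x ≤ 1/2 then ({2*x, 1 - 2*x} : Finset ℝ) else {2*x - 1}) x B
          ∂(volume.restrict (Set.Icc (0:ℝ) 1)) =
        (volume.restrict (Set.Icc (0:ℝ) 1)) B := by
  intro B hB
  change ∫⁻ x in Icc 0 1, fker twoTransformation x B = _
  rw [← Icc_union_Ioc_eq_Icc (by norm_num : (0 : ℝ) ≤ 1 / 2) (by norm_num),
    lintegral_union measurableSet_Ioc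
      ((Set.Iic_disjoint_Ioc le_rfl).mono_left Set.Icc_subset_Iic_self),
    setLIntegral_fker_twoTransformation_Icc hB, setLIntegral_fker_twoTransformation_Ioc hB,
    Icc_union_Ioc_eq_Icc (by norm_num) (by norm_num), ENNReal.add_halves]
end
end

section
/- The 2-transformation S : [0,1] → [0,1] defined by S(x) = {(3/2)x} for x ∈ [0,1/3), S(x) = {(3/2)x, (3/2)x − 1/2} for x ∈ [1/3,2/3], and S(x) = {(3/2)x − 1/2} for x ∈ (2/3,1] preserves Lebesgue measure λ. -/
open MeasureTheory Set Filter Finset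
open scoped ENNReal Classical

noncomputable section

/-!
Dually, it suffices that the averaging operator `Uφ(x) = (1/|S(x)|) ∑_{y ∈ S(x)} φ(y)` preserves
`∫_{[0,1]}` for every measurable `φ ≥ 0`; the theorem is the case `φ = 1_B`. Both branches
`x ↦ 3x/2` and `x ↦ 3x/2 - 1/2` push Lebesgue measure forward to `2/3` of itself. Each half of
`[0,1]` is reached once from a single-valued piece of `S` (weight `1`) and once from the
double-valued piece `[1/3, 2/3]` (weight `1/2`), so it receives `(2/3)(1 + 1/2) = 1` times its
own integral.
-/

def koopENNReal {X : Type*} (S : X → Finset X) (φ : X → ℝ≥0∞) (x : X) : ℝ≥0∞ :=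
  (∑ y ∈ S x, φ y) / (S x).card

lemma fker_eq_koopENNReal_indicator {X : Type*} (S : X → Finset X) (x : X) (B : Set X) :
    fker S x B = koopENNReal S (B.indicator 1) x := by
  simp only [fker, koopENNReal, Set.indicator_apply, Pi.one_apply, Finset.sum_boole]

lemma setLIntegral_comp_of_map_eq_smul {α β : Type*} [MeasurableSpace α] [MeasurableSpace β]
    {μ : Measure α} {ν : Measure β} {f : α → β} {c : ℝ≥0∞} (hf : Measurable f)
    (hmap : μ.map f = c • ν) {φ : β → ℝ≥0∞} (hφ : Measurable φ) {s : Set β} {t : Set α}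
    (hs : MeasurableSet s) (ht : f ⁻¹' s = t) :
    ∫⁻ x in t, φ (f x) ∂μ = c * ∫⁻ y in s, φ y ∂ν := by
  rw [← ht, ← setLIntegral_map hs hφ hf, hmap, Measure.restrict_smul, lintegral_smul_measure,
    smul_eq_mul]

lemma Real.map_volume_mul_sub {a : ℝ} (ha : a ≠ 0) (b : ℝ) :
    volume.map (fun x : ℝ => a * x - b) = ENNReal.ofReal |a⁻¹| • volume := by
  have h : (fun x : ℝ => a * x - b) = (· + -b) ∘ (a * ·) := by
    funext x; simp [sub_eq_add_neg]
  rw [h, ← Measure.map_map (measurable_add_const _) (measurable_const_mul a),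
    Real.map_volume_mul_left ha, Measure.map_smul, map_add_right_eq_self]

lemma setLIntegral_Icc_ite {a b c d : ℝ} (hab : a ≤ b) (hbc : b ≤ c) (hcd : c ≤ d)
    (f g h : ℝ → ℝ≥0∞) :
    ∫⁻ x in Icc a d, (if x < b then f x else if x ≤ c then g x else h x) =
      (∫⁻ x in Ico a b, f x) + (∫⁻ x in Icc b c, g x) + ∫⁻ x in Ioc c d, h x := by
  have hdisj₁ : Disjoint (Ico a b) (Icc b c ∪ Ioc c d) := by
    rw [Icc_union_Ioc_eq_Icc hbc hcd]
    exact Set.disjoint_left.2 fun x hx hx' => hx.2.not_ge hx'.1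
  have hdisj₂ : Disjoint (Icc b c) (Ioc c d) :=
    Set.disjoint_left.2 fun x hx hx' => hx'.1.not_ge hx.2
  rw [← Ico_union_Icc_eq_Icc hab (hbc.trans hcd), ← Icc_union_Ioc_eq_Icc hbc hcd,
    lintegral_union (measurableSet_Icc.union measurableSet_Ioc) hdisj₁,
    lintegral_union measurableSet_Ioc hdisj₂, add_assoc]
  congr 1
  · exact setLIntegral_congr_fun measurableSet_Ico fun x hx => if_pos hx.2
  congr 1
  · exact setLIntegral_congr_fun measurableSet_Icc fun x hx => by
      rw [if_neg hx.1.not_gt, if_pos hx.2]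
  · exact setLIntegral_congr_fun measurableSet_Ioc fun x hx => by
      rw [if_neg (hbc.trans_lt hx.1).not_gt, if_neg hx.1.not_ge]

def threeHalvesMap (x : ℝ) : Finset ℝ :=
  if x < 1/3 then {(3/2) * x} else if x ≤ 2/3 then {(3/2) * x, (3/2) * x - 1/2}
  else {(3/2) * x - 1/2}

lemma koopENNReal_threeHalvesMap (φ : ℝ → ℝ≥0∞) (x : ℝ) :
    koopENNReal threeHalvesMap φ x =
      if x < 1/3 then φ ((3/2) * x)
      else if x ≤ 2/3 then 2⁻¹ * (φ ((3/2) * x) + φ ((3/2) * x - 1/2))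
      else φ ((3/2) * x - 1/2) := by
  have hne : (3/2) * x ≠ (3/2) * x - 1/2 := by linarith
  unfold koopENNReal threeHalvesMap
  split_ifs
  · simp
  · rw [Finset.sum_pair hne, Finset.card_pair hne, ENNReal.div_eq_inv_mul]; norm_num
  · simp

lemma ofReal_abs_inv_three_halves_add_half :
    ENNReal.ofReal |(3/2 : ℝ)⁻¹| + 2⁻¹ * ENNReal.ofReal |(3/2 : ℝ)⁻¹| = 1 := by
  rw [← ENNReal.ofReal_ofNat 2, ← ENNReal.ofReal_inv_of_pos two_pos,
    ← ENNReal.ofReal_mul (by norm_num), ← ENNReal.ofReal_add (by positivity) (by positivity)]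
  norm_num

theorem setLIntegral_koopENNReal_threeHalvesMap {φ : ℝ → ℝ≥0∞} (hφ : Measurable φ) :
    ∫⁻ x in Icc 0 1, koopENNReal threeHalvesMap φ x = ∫⁻ x in Icc 0 1, φ x := by
  set c := ENNReal.ofReal |(3/2 : ℝ)⁻¹|
  have hm₁ : Measurable fun x : ℝ => (3/2) * x := by fun_prop
  have hm₂ : Measurable fun x : ℝ => (3/2) * x - 1/2 := by fun_prop
  have hφ₁ : Measurable fun x : ℝ => φ ((3/2) * x) := hφ.comp hm₁
  have hmap₁ : volume.map (fun x : ℝ => (3/2) * x) = c • volume :=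
    Real.map_volume_mul_left (by norm_num)
  have hmap₂ : volume.map (fun x : ℝ => (3/2) * x - 1/2) = c • volume :=
    Real.map_volume_mul_sub (by norm_num) _
  set u := ∫⁻ y in Icc 0 (1/2), φ y
  set v := ∫⁻ y in Ioc (1/2) 1, φ y
  obtain ⟨hI₁, hI₂, hI₃, hI₄⟩ :
      (fun x : ℝ => (3/2) * x) ⁻¹' Ico 0 (1/2) = Set.Ico 0 (1/3) ∧
      (fun x : ℝ => (3/2) * x) ⁻¹' Icc (1/2) 1 = Set.Icc (1/3) (2/3) ∧
      (fun x : ℝ => (3/2) * x - 1/2) ⁻¹' Icc 0 (1/2) = Set.Icc (1/3) (2/3) ∧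
      (fun x : ℝ => (3/2) * x - 1/2) ⁻¹' Ioc (1/2) 1 = Set.Ioc (2/3) 1 := by
    refine ⟨?_, ?_, ?_, ?_⟩ <;> ext x <;>
      simp only [Set.mem_preimage, Set.mem_Ico, Set.mem_Icc, Set.mem_Ioc] <;>
      constructor <;> rintro ⟨h₁, h₂⟩ <;> constructor <;> linarith
  have e₁ : ∫⁻ x in Ico 0 (1/3), φ ((3/2) * x) = c * u := by
    rw [setLIntegral_comp_of_map_eq_smul hm₁ hmap₁ hφ measurableSet_Ico hI₁,
      setLIntegral_congr Ico_ae_eq_Icc]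
  have e₂ : ∫⁻ x in Icc (1/3) (2/3), φ ((3/2) * x) = c * v := by
    rw [setLIntegral_comp_of_map_eq_smul hm₁ hmap₁ hφ measurableSet_Icc hI₂,
      setLIntegral_congr Ioc_ae_eq_Icc.symm]
  have e₃ : ∫⁻ x in Icc (1/3) (2/3), φ ((3/2) * x - 1/2) = c * u :=
    setLIntegral_comp_of_map_eq_smul hm₂ hmap₂ hφ measurableSet_Icc hI₃
  have e₄ : ∫⁻ x in Ioc (2/3) 1, φ ((3/2) * x - 1/2) = c * v :=
    setLIntegral_comp_of_map_eq_smul hm₂ hmap₂ hφ measurableSet_Ioc hI₄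
  have hunion : ∫⁻ x in Icc 0 1, φ x = u + v := by
    rw [← Icc_union_Ioc_eq_Icc (by norm_num : (0:ℝ) ≤ 1/2) (by norm_num),
      lintegral_union measurableSet_Ioc (Set.disjoint_left.2 fun x hx hx' => hx'.1.not_ge hx.2)]
  simp only [koopENNReal_threeHalvesMap]
  rw [setLIntegral_Icc_ite (by norm_num) (by norm_num) (by norm_num),
    lintegral_const_mul' _ _ (by simp), lintegral_add_left hφ₁,
    e₁, e₂, e₃, e₄, hunion]
  calc c * u + 2⁻¹ * (c * v + c * u) + c * v = (c + 2⁻¹ * c) * (u + v) := by ring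
    _ = u + v := by rw [ofReal_abs_inv_three_halves_add_half, one_mul]

/-- the 2-transformation of Example 3 preserves Lebesgue measure on `[0,1]`. -/
theorem ex3_preserving :
    ∀ B : Set ℝ, MeasurableSet B →
      ∫⁻ x, fker (fun x : ℝ =>
          if x < 1/3 then ({(3/2)*x} : Finset ℝ)
          else if x ≤ 2/3 then {(3/2)*x, (3/2)*x - 1/2}
          else {(3/2)*x - 1/2}) x B
          ∂(volume.restrict (Set.Icc (0:ℝ) 1)) =
        (volume.restrict (Set.Icc (0:ℝ) 1)) B := by
  intro B hB
  simp only [fker_eq_koopENNReal_indicator]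
  rw [← lintegral_indicator_one hB]
  exact setLIntegral_koopENNReal_threeHalvesMap (measurable_one.indicator hB)
end
end

section
/- The 2-transformation S(x) = {(3/2)x} for x ∈ [0,1/3), {(3/2)x, (3/2)x − 1/2} for x ∈ [1/3,2/3], {(3/2)x − 1/2} for x ∈ (2/3,1] cannot be written as a finite union S(x) = ⋃ᵢ Sᵢ(x) of single-valued Lebesgue-measure-preserving transformations Sᵢ of [0,1]. -/
open MeasureTheory Set Filter Finset
open scoped ENNReal Classical

noncomputable section

/-- the 2-transformation of Example 3 cannot be written as a finite union
of single-valued Lebesgue-measure-preserving transformations of `[0,1]`. -/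
theorem ex3_not_union :
    ¬ ∃ (k : ℕ) (T : Fin k → ℝ → ℝ),
        (∀ i, Measurable (T i)) ∧
        (∀ i, ∀ B : Set ℝ, MeasurableSet B →
          (volume.restrict (Set.Icc (0:ℝ) 1)) (T i ⁻¹' B) =
            (volume.restrict (Set.Icc (0:ℝ) 1)) B) ∧
        (∀ x ∈ Set.Icc (0:ℝ) 1,
          (((fun x : ℝ =>
          if x < 1/3 then ({(3/2)*x} : Finset ℝ)
          else if x ≤ 2/3 then {(3/2)*x, (3/2)*x - 1/2}
          else {(3/2)*x - 1/2}) x : Finset ℝ) : Set ℝ) = ⋃ i, {T i x}) := by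
  rintro ⟨k, T, hmeas, hpres, hunion⟩
  -- pick an index i
  have h0 : (0:ℝ) ∈ Set.Icc (0:ℝ) 1 := by constructor <;> norm_num
  have h0' := hunion 0 h0
  have hmem0 : (0:ℝ) ∈ (⋃ i, {T i 0} : Set ℝ) := by
    rw [← h0']
    simp only [if_pos (by norm_num : (0:ℝ) < 1/3)]
    simp
  rw [Set.mem_iUnion] at hmem0
  obtain ⟨i, -⟩ := hmem0
  set f : ℝ → ℝ := T i with hf
  have hfmeas : Measurable f := hmeas i
  -- f always selects a branch of S
  have hbranch : ∀ x ∈ Set.Icc (0:ℝ) 1,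
      f x ∈ (((if x < 1/3 then ({(3/2)*x} : Finset ℝ)
        else if x ≤ 2/3 then {(3/2)*x, (3/2)*x - 1/2}
        else {(3/2)*x - 1/2}) : Finset ℝ) : Set ℝ) := by
    intro x hx
    rw [hunion x hx]
    exact Set.mem_iUnion.2 ⟨i, rfl⟩
  have hlow : ∀ x : ℝ, 0 ≤ x → x < 1/3 → f x = 3/2 * x := by
    intro x hx0 hx1
    have h := hbranch x ⟨hx0, by linarith⟩
    rw [if_pos hx1] at h
    simpa using h
  have hmid : ∀ x : ℝ, 1/3 ≤ x → x ≤ 2/3 → f x = 3/2 * x ∨ f x = 3/2 * x - 1/2 := by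
    intro x hx0 hx1
    have h := hbranch x ⟨by linarith, by linarith⟩
    rw [if_neg (by linarith), if_pos hx1] at h
    simpa using h
  have hhigh : ∀ x : ℝ, 2/3 < x → x ≤ 1 → f x = 3/2 * x - 1/2 := by
    intro x hx0 hx1
    have h := hbranch x ⟨by linarith, hx1⟩
    rw [if_neg (by linarith), if_neg (by linarith)] at h
    simpa using h
  -- the lower-branch set
  set L : Set ℝ := {x | f x = 3/2 * x - 1/2} ∩ Set.Ico (1/3:ℝ) (2/3) with hL
  have hLmeas : MeasurableSet L := by
    apply MeasurableSet.inter _ measurableSet_Ico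
    exact measurableSet_eq_fun hfmeas ((measurable_const.mul measurable_id).sub measurable_const)
  have hLsub : L ⊆ Set.Ico (1/3:ℝ) (2/3) := Set.inter_subset_right
  -- Step 1: volume L = 1/6, from measure preservation on B = [0, 1/2)
  have hB1 := hpres i (Set.Ico (0:ℝ) (1/2)) measurableSet_Ico
  rw [Measure.restrict_apply (hfmeas measurableSet_Ico),
      Measure.restrict_apply measurableSet_Ico] at hB1
  have hinter1 : Set.Ico (0:ℝ) (1/2) ∩ Set.Icc (0:ℝ) 1 = Set.Ico (0:ℝ) (1/2) := by
    apply Set.inter_eq_left.2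
    intro y hy
    exact ⟨hy.1, by linarith [hy.2]⟩
  have hset1 : f ⁻¹' (Set.Ico (0:ℝ) (1/2)) ∩ Set.Icc (0:ℝ) 1 = Set.Ico (0:ℝ) (1/3) ∪ L := by
    ext x
    constructor
    · rintro ⟨hx, hx0, hx1⟩
      simp only [Set.mem_preimage, Set.mem_Ico] at hx
      by_cases h13 : x < 1/3
      · exact Or.inl ⟨hx0, h13⟩
      · push_neg at h13
        by_cases h23 : x ≤ 2/3
        · rcases hmid x h13 h23 with h | h
          · exfalso; rw [h] at hx; linarith [hx.2]
          · refine Or.inr ⟨h, h13, ?_⟩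
            rw [h] at hx; linarith [hx.2]
        · push_neg at h23
          exfalso
          have := hhigh x h23 hx1
          rw [this] at hx
          linarith [hx.2]
    · rintro (⟨hx0, hx1⟩ | ⟨hfx, hx0, hx1⟩)
      · refine ⟨?_, hx0, by linarith⟩
        simp only [Set.mem_preimage, Set.mem_Ico]
        rw [hlow x hx0 hx1]
        constructor <;> linarith
      · refine ⟨?_, by linarith, by linarith⟩
        simp only [Set.mem_preimage, Set.mem_Ico]
        rw [hfx]
        constructor <;> linarith
  rw [hset1, hinter1] at hB1
  have hdisj1 : Disjoint (Set.Ico (0:ℝ) (1/3)) L := by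
    apply Set.disjoint_left.2
    rintro x ⟨-, hx1⟩ hxL
    exact absurd (hLsub hxL).1 (by linarith)
  rw [measure_union hdisj1 hLmeas] at hB1
  have hIco13 : volume (Set.Ico (0:ℝ) (1/3)) = ENNReal.ofReal (1/3) := by
    rw [Real.volume_Ico]; norm_num
  have hIco12 : volume (Set.Ico (0:ℝ) (1/2)) = ENNReal.ofReal (1/2) := by
    rw [Real.volume_Ico]; norm_num
  rw [hIco13, hIco12] at hB1
  have hvL : volume L = ENNReal.ofReal (1/6) := by
    have h12 : ENNReal.ofReal (1/2) = ENNReal.ofReal (1/3) + ENNReal.ofReal (1/6) := by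
      rw [← ENNReal.ofReal_add (by norm_num) (by norm_num)]; norm_num
    rw [h12] at hB1
    exact (ENNReal.add_right_inj ENNReal.ofReal_ne_top).1 hB1
  -- Step 2: the set B₂ = image of L under the lower branch
  set B₂ : Set ℝ := (fun y : ℝ => 2/3 * y + 1/3) ⁻¹' L with hB₂def
  have hB₂meas : MeasurableSet B₂ :=
    hLmeas.preimage ((measurable_const.mul measurable_id).add measurable_const)
  have hvB₂ : volume B₂ = ENNReal.ofReal (1/4) := by
    have hcomp : B₂ = ((2/3 : ℝ) * ·) ⁻¹' ((· + (1/3 : ℝ)) ⁻¹' L) := rfl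
    rw [hcomp, Real.volume_preimage_mul_left (by norm_num : (2/3:ℝ) ≠ 0),
        measure_preimage_add_right volume (1/3 : ℝ) L, hvL,
        ← ENNReal.ofReal_mul (by positivity)]
    norm_num [abs_of_pos]
  -- the shifted copy of L inside [0,1/3)
  set D : Set ℝ := (fun x : ℝ => x + 1/3) ⁻¹' L with hDdef
  have hDmeas : MeasurableSet D := hLmeas.preimage (measurable_id.add measurable_const)
  have hvD : volume D = ENNReal.ofReal (1/6) := by
    rw [hDdef, measure_preimage_add_right volume (1/3 : ℝ) L, hvL]
  have hDsub : D ⊆ Set.Ico (0:ℝ) (1/3) := by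
    intro x hx
    have := hLsub hx
    exact ⟨by linarith [this.1], by linarith [this.2]⟩
  -- Step 3: measure preservation on B₂ gives a contradiction
  have hB2 := hpres i B₂ hB₂meas
  rw [Measure.restrict_apply (hfmeas hB₂meas),
      Measure.restrict_apply hB₂meas] at hB2
  have hsub2 : L ∪ D ⊆ f ⁻¹' B₂ ∩ Set.Icc (0:ℝ) 1 := by
    rintro x (hx | hx)
    · obtain ⟨hfx, hx1, hx2⟩ := hx
      refine ⟨?_, by linarith, by linarith⟩
      simp only [Set.mem_preimage, hB₂def]
      rw [hfx]
      have : 2/3 * (3/2 * x - 1/2) + 1/3 = x := by ring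
      rw [this]
      exact ⟨hfx, hx1, hx2⟩
    · have hxI := hDsub hx
      refine ⟨?_, hxI.1, by linarith [hxI.2]⟩
      simp only [Set.mem_preimage, hB₂def]
      rw [hlow x hxI.1 hxI.2]
      have : 2/3 * (3/2 * x) + 1/3 = x + 1/3 := by ring
      rw [this]
      exact hx
  have hdisj2 : Disjoint L D := by
    apply Set.disjoint_left.2
    intro x hxL hxD
    exact absurd (hLsub hxL).1 (by linarith [(hDsub hxD).2])
  have hlower : ENNReal.ofReal (1/3) ≤ volume (f ⁻¹' B₂ ∩ Set.Icc (0:ℝ) 1) := by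
    calc ENNReal.ofReal (1/3) = volume L + volume D := by
          rw [hvL, hvD, ← ENNReal.ofReal_add (by norm_num) (by norm_num)]; norm_num
      _ = volume (L ∪ D) := (measure_union hdisj2 hDmeas).symm
      _ ≤ _ := measure_mono hsub2
  have hupper : volume (B₂ ∩ Set.Icc (0:ℝ) 1) ≤ ENNReal.ofReal (1/4) := by
    rw [← hvB₂]
    exact measure_mono Set.inter_subset_left
  rw [hB2] at hlower
  have : ENNReal.ofReal (1/3) ≤ ENNReal.ofReal (1/4) := le_trans hlower hupper
  rw [ENNReal.ofReal_le_ofReal_iff (by norm_num)] at this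
  linarith
end
end

section
/- Let S be a nonsingular m-transformation on a probability space (X,𝓑,μ) such that μ(A) ≤ μ(S⁻¹(A)) for every A ∈ 𝓑. If μ(B) > 0, then for almost every x ∈ B there exists an orbit of x that returns to B infinitely often. -/
open MeasureTheory Set Filter Finset
open scoped ENNReal Classical

noncomputable section

namespace RecurrenceAux
variable {X : Type*}

lemma mem_fullPre {S : X → Finset X} {A : Set X} {x : X} :
    x ∈ fullPre S A ↔ ∃ y ∈ S x, y ∈ A := Iff.rfl

lemma fullPre_iUnion (S : X → Finset X) {ι : Sort*} (A : ι → Set X) :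
    fullPre S (⋃ i, A i) = ⋃ i, fullPre S (A i) := by
  ext x
  simp only [mem_fullPre, Set.mem_iUnion]
  tauto

lemma fullPre_mono (S : X → Finset X) {A B : Set X} (h : A ⊆ B) :
    fullPre S A ⊆ fullPre S B := by
  rintro x ⟨y, hy, hyA⟩; exact ⟨y, hy, h hyA⟩

lemma measurable_fullPre [MeasurableSpace X] {S : X → Finset X}
    (hmeas : ∀ B : Set X, MeasurableSet B → ∀ k l : ℕ, MeasurableSet (preimKL S k l B))
    {A : Set X} (hA : MeasurableSet A) : MeasurableSet (fullPre S A) := by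
  have h : fullPre S A = ⋃ k, ⋃ l, ⋃ (_ : 1 ≤ l), preimKL S k l A := by
    ext x
    simp only [mem_fullPre, Set.mem_iUnion, preimKL, Set.mem_setOf_eq]
    constructor
    · rintro ⟨y, hy, hyA⟩
      exact ⟨(S x).card, ((S x).filter (fun y => y ∈ A)).card,
        Finset.card_pos.2 ⟨y, Finset.mem_filter.2 ⟨hy, hyA⟩⟩, rfl, rfl⟩
    · rintro ⟨k, l, hl, _, hfl⟩
      obtain ⟨y, hy⟩ := Finset.card_pos.1 (by rw [hfl]; exact hl)
      exact ⟨y, (Finset.mem_filter.1 hy).1, (Finset.mem_filter.1 hy).2⟩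
  rw [h]
  exact MeasurableSet.iUnion fun k => MeasurableSet.iUnion fun l =>
    MeasurableSet.iUnion fun _ => hmeas A hA k l

lemma measurable_iter [MeasurableSpace X] {S : X → Finset X}
    (hmeas : ∀ B : Set X, MeasurableSet B → ∀ k l : ℕ, MeasurableSet (preimKL S k l B))
    {A : Set X} (hA : MeasurableSet A) (n : ℕ) : MeasurableSet ((fullPre S)^[n] A) := by
  induction n with
  | zero => exact hA
  | succ n ih => rw [Function.iterate_succ_apply']; exact measurable_fullPre hmeas ih

lemma iter_path {S : X → Finset X} {T : Set X} :
    ∀ (n : ℕ) (x : X), x ∈ (fullPre S)^[n] T →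
      ∃ p : ℕ → X, p 0 = x ∧ (∀ i < n, p (i + 1) ∈ S (p i)) ∧ p n ∈ T := by
  intro n
  induction n with
  | zero => intro x hx; exact ⟨fun _ => x, rfl, fun i hi => absurd hi (Nat.not_lt_zero i), hx⟩
  | succ n ih =>
    intro x hx
    rw [Function.iterate_succ_apply'] at hx
    obtain ⟨y, hy, hyT⟩ := hx
    obtain ⟨p', hp0, hps, hpn⟩ := ih y hyT
    refine ⟨fun i => if i = 0 then x else p' (i - 1), by simp, ?_, by simpa using hpn⟩
    intro i hi
    cases i with
    | zero => simpa [hp0] using hy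
    | succ i => simpa using hps i (by omega)

lemma path_iter {S : X → Finset X} :
    ∀ (n : ℕ) (T : Set X) (x : X) (p : ℕ → X), p 0 = x → (∀ i < n, p (i + 1) ∈ S (p i)) →
      p n ∈ T → x ∈ (fullPre S)^[n] T := by
  intro n
  induction n with
  | zero => intro T x p hp0 _ hpn; rw [← hp0]; exact hpn
  | succ n ih =>
    intro T x p hp0 hps hpn
    rw [Function.iterate_succ_apply]
    exact ih (fullPre S T) x p hp0 (fun i hi => hps i (by omega))
      ⟨p (n + 1), hps n (by omega), hpn⟩

lemma poincare [MeasurableSpace X] (μ : Measure X) [IsProbabilityMeasure μ] {S : X → Finset X}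
    (hmeas : ∀ B : Set X, MeasurableSet B → ∀ k l : ℕ, MeasurableSet (preimKL S k l B))
    (hmono : ∀ A : Set X, MeasurableSet A → μ A ≤ μ (fullPre S A))
    {B' : Set X} (hB' : MeasurableSet B') :
    μ (B' \ ⋃ j, (fullPre S)^[j + 1] B') = 0 := by
  set A : ℕ → Set X := fun n => ⋃ j, (fullPre S)^[j] ((fullPre S)^[n] B') with hA
  have hAmeas : ∀ n, MeasurableSet (A n) := fun n =>
    MeasurableSet.iUnion fun j => measurable_iter hmeas (measurable_iter hmeas hB' n) j
  have hstep : fullPre S (A 0) = A 1 := by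
    rw [hA]
    simp only
    rw [fullPre_iUnion]
    apply Set.iUnion_congr
    intro j
    simp only [Function.iterate_zero_apply, Function.iterate_one]
    exact (Function.iterate_succ_apply' _ j _).symm.trans (Function.iterate_succ_apply _ j _)
  have hsub : A 1 ⊆ A 0 := by
    intro x hx
    simp only [hA, Set.mem_iUnion] at hx ⊢
    obtain ⟨j, hj⟩ := hx
    refine ⟨j + 1, ?_⟩
    rw [Function.iterate_zero_apply, Function.iterate_add_apply]
    exact hj
  have heq : μ (A 1) = μ (A 0) :=
    le_antisymm (measure_mono hsub) (by rw [← hstep]; exact hmono (A 0) (hAmeas 0))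
  have hdiff : μ (A 0 \ A 1) = 0 := by
    rw [measure_diff hsub (hAmeas 1).nullMeasurableSet (measure_ne_top μ _), heq, tsub_self]
  refine measure_mono_null ?_ hdiff
  rintro x ⟨hx1, hx2⟩
  constructor
  · exact Set.mem_iUnion.2 ⟨0, by simpa using hx1⟩
  · intro hx
    apply hx2
    obtain ⟨j, hj⟩ := Set.mem_iUnion.1 hx
    refine Set.mem_iUnion.2 ⟨j, ?_⟩
    rw [Function.iterate_add_apply]
    exact hj

end RecurrenceAux



open RecurrenceAux in
theorem recurrence {X : Type*} [MeasurableSpace X] (μ : Measure X)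
    [IsProbabilityMeasure μ] (m : ℕ) (hm : 0 < m) (S : X → Finset X)
    (hcard : ∀ x, 1 ≤ (S x).card ∧ (S x).card ≤ m)
    (hmeas : ∀ B : Set X, MeasurableSet B → ∀ k l : ℕ, MeasurableSet (preimKL S k l B))
    (hns : ∀ B : Set X, MeasurableSet B → μ B = 0 → μ (fullPre S B) = 0)
    (hmono : ∀ A : Set X, MeasurableSet A → μ A ≤ μ (fullPre S A))
    (B : Set X) (hB : MeasurableSet B) (hBpos : 0 < μ B) :
    ∀ᵐ x ∂μ, x ∈ B → ∃ orb : ℕ → X, orb 0 = x ∧ (∀ n, orb (n + 1) ∈ S (orb n)) ∧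
        {n : ℕ | orb n ∈ B}.Infinite := by
  classical
  set I : Set (Set X) := {C | MeasurableSet C ∧ μ (B \ C) = 0} with hI
  have hunivI : Set.univ ∈ I := ⟨MeasurableSet.univ, by simp⟩
  set s : ℝ≥0∞ := ⨅ (C : Set X) (_ : C ∈ I), μ C with hs
  have hs_le : ∀ C ∈ I, s ≤ μ C := fun C hC => iInf₂_le C hC
  have hs_top : s ≠ ⊤ := ne_top_of_le_ne_top (measure_ne_top μ Set.univ) (hs_le _ hunivI)
  have hseq : ∀ n : ℕ, ∃ C ∈ I, μ C < s + (n + 1 : ℝ≥0∞)⁻¹ := by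
    intro n
    by_contra h
    push_neg at h
    have h1 : s + (n + 1 : ℝ≥0∞)⁻¹ ≤ s := le_iInf₂ fun C hC => h C hC
    have h2 : s < s + (n + 1 : ℝ≥0∞)⁻¹ :=
      ENNReal.lt_add_right hs_top (ENNReal.inv_ne_zero.2 (by simp))
    exact absurd (lt_of_lt_of_le h2 h1) (lt_irrefl s)
  choose Cn hCnI hCnlt using hseq
  set Cs : Set X := ⋂ n, Cn n with hCs
  have hCsMeas : MeasurableSet Cs := MeasurableSet.iInter fun n => (hCnI n).1
  have hCsI : Cs ∈ I := by
    refine ⟨hCsMeas, measure_mono_null ?_ (measure_iUnion_null_iff.2 fun n => (hCnI n).2)⟩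
    rintro x ⟨hxB, hxC⟩
    rw [Set.mem_iInter] at hxC
    push_neg at hxC
    obtain ⟨n, hn⟩ := hxC
    exact Set.mem_iUnion.2 ⟨n, hxB, hn⟩
  have hμCs : μ Cs = s := by
    refine le_antisymm ?_ (hs_le _ hCsI)
    refine ENNReal.le_of_forall_pos_le_add fun ε hε _ => ?_
    obtain ⟨k, hk⟩ := ENNReal.exists_inv_nat_lt (show (ε : ℝ≥0∞) ≠ 0 by
      simpa using hε.ne')
    have h1 : μ Cs ≤ μ (Cn k) := measure_mono (Set.iInter_subset _ k)
    have h2 : (k + 1 : ℝ≥0∞)⁻¹ ≤ (k : ℝ≥0∞)⁻¹ := by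
      apply ENNReal.inv_le_inv.2; simp
    calc μ Cs ≤ μ (Cn k) := h1
      _ ≤ s + (k + 1 : ℝ≥0∞)⁻¹ := (hCnlt k).le
      _ ≤ s + (ε : ℝ≥0∞) := by gcongr; exact le_of_lt (lt_of_le_of_lt h2 hk)
  set Psi : Set X := ⋃ j, (fullPre S)^[j + 1] (B ∩ Cs) with hPsi
  have hPsiMeas : MeasurableSet Psi :=
    MeasurableSet.iUnion fun j => measurable_iter hmeas (hB.inter hCsMeas) (j + 1)
  have hBPsi : μ (B \ Psi) = 0 := by
    have h1 : μ ((B ∩ Cs) \ Psi) = 0 := poincare μ hmeas hmono (hB.inter hCsMeas)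
    refine measure_mono_null ?_ (measure_union_null hCsI.2 h1)
    rintro x ⟨hxB, hxP⟩
    by_cases hc : x ∈ Cs
    · exact Or.inr ⟨⟨hxB, hc⟩, hxP⟩
    · exact Or.inl ⟨hxB, hc⟩
  have hC'I : Cs ∩ Psi ∈ I := by
    refine ⟨hCsMeas.inter hPsiMeas, measure_mono_null ?_ (measure_union_null hCsI.2 hBPsi)⟩
    rintro x ⟨hxB, hxCP⟩
    by_cases hc : x ∈ Cs
    · exact Or.inr ⟨hxB, fun hp => hxCP ⟨hc, hp⟩⟩
    · exact Or.inl ⟨hxB, hc⟩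
  have hN0null : μ (Cs \ Psi) = 0 := by
    have h1 : s ≤ μ (Cs ∩ Psi) := hs_le _ hC'I
    have h2 : μ (Cs ∩ Psi) = s :=
      le_antisymm (hμCs ▸ measure_mono Set.inter_subset_left) h1
    have h3 : μ (Cs \ (Cs ∩ Psi)) = 0 := by
      rw [measure_diff Set.inter_subset_left (hCsMeas.inter hPsiMeas).nullMeasurableSet
        (measure_ne_top μ _), h2, hμCs, tsub_self]
    refine measure_mono_null (fun x hx => ?_) h3
    exact ⟨hx.1, fun hc => hx.2 hc.2⟩
  set N0 : Set X := Cs \ Psi with hN0def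
  have hN0meas : MeasurableSet N0 := hCsMeas.diff hPsiMeas
  have hNk : ∀ k, MeasurableSet ((fullPre S)^[k] N0) ∧ μ ((fullPre S)^[k] N0) = 0 := by
    intro k
    induction k with
    | zero => exact ⟨hN0meas, hN0null⟩
    | succ k ih =>
      rw [Function.iterate_succ_apply']
      exact ⟨measurable_fullPre hmeas ih.1, hns _ ih.1 ih.2⟩
  set N : Set X := ⋃ k, (fullPre S)^[k] N0 with hNdef
  have hNnull : μ N = 0 := measure_iUnion_null_iff.2 fun k => (hNk k).2
  set Good : Set X := Cs \ N with hGood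
  have hop : ∀ x ∈ Good, ∃ k, ∃ p : ℕ → X, 0 < k ∧ p 0 = x ∧
      (∀ i < k, p (i + 1) ∈ S (p i)) ∧ p k ∈ B ∩ Good := by
    rintro x ⟨hxC, hxN⟩
    have hxN0 : x ∉ N0 := fun h => hxN (Set.mem_iUnion.2 ⟨0, h⟩)
    have hxPsi : x ∈ Psi := by
      by_contra h; exact hxN0 ⟨hxC, h⟩
    obtain ⟨j, hj⟩ := Set.mem_iUnion.1 hxPsi
    obtain ⟨p, hp0, hps, hpk⟩ := iter_path (j + 1) x hj
    refine ⟨j + 1, p, Nat.succ_pos j, hp0, hps, hpk.1, hpk.2, ?_⟩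
    intro hmem
    obtain ⟨kk, hkk⟩ := Set.mem_iUnion.1 hmem
    apply hxN
    refine Set.mem_iUnion.2 ⟨j + 1 + kk, ?_⟩
    rw [Function.iterate_add_apply]
    exact path_iter (j + 1) _ x p hp0 hps hkk
  choose! kf pf hkpos hp0 hpstep hpend using hop
  have hmain : ∀ x ∈ Good, ∃ orb : ℕ → X, orb 0 = x ∧ (∀ n, orb (n + 1) ∈ S (orb n)) ∧
      {n : ℕ | orb n ∈ B}.Infinite := by
    intro x hxG
    set F : X × ℕ → X × ℕ := fun q => (pf q.1 (kf q.1), q.2 + kf q.1) with hF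
    set st : ℕ → X × ℕ := fun n => F^[n] (x, 0) with hst
    set a : ℕ → X := fun n => (st n).1 with ha
    set t : ℕ → ℕ := fun n => (st n).2 with ht
    have hst_succ : ∀ n, st (n + 1) = (pf (a n) (kf (a n)), t n + kf (a n)) := by
      intro n
      show F^[n + 1] (x, 0) = _
      rw [Function.iterate_succ_apply']
    have ha_succ : ∀ n, a (n + 1) = pf (a n) (kf (a n)) := by
      intro n; show (st (n + 1)).1 = _; rw [hst_succ n]
    have ht_succ : ∀ n, t (n + 1) = t n + kf (a n) := by
      intro n; show (st (n + 1)).2 = _; rw [hst_succ n]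
    have ha0 : a 0 = x := rfl
    have ht0 : t 0 = 0 := rfl
    have haG : ∀ n, a n ∈ Good := by
      intro n
      induction n with
      | zero => exact hxG
      | succ n ih => rw [ha_succ]; exact (hpend (a n) ih).2
    have hkpos' : ∀ n, 0 < kf (a n) := fun n => hkpos (a n) (haG n)
    have ht_mono : StrictMono t := strictMono_nat_of_lt_succ fun n => by
      have := hkpos' n; rw [ht_succ]; omega
    have ht_ge : ∀ n, n ≤ t n := by
      intro n
      induction n with
      | zero => omega
      | succ n ih => have := hkpos' n; rw [ht_succ]; omega
    set idx : ℕ → ℕ := fun j => Nat.findGreatest (fun n => t n ≤ j) j with hidx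
    have hidx_le : ∀ j, t (idx j) ≤ j := fun j =>
      Nat.findGreatest_spec (P := fun n => t n ≤ j) (Nat.zero_le j)
        (show t 0 ≤ j from Nat.zero_le j)
    have hidx_lt : ∀ j, j < t (idx j + 1) := by
      intro j
      by_cases h : idx j + 1 ≤ j
      · by_contra h2
        push_neg at h2
        exact Nat.findGreatest_is_greatest (P := fun n => t n ≤ j) (Nat.lt_succ_self _) h h2
      · have h1 : j < idx j + 1 := by omega
        exact lt_of_lt_of_le h1 (ht_ge _)
    have hidx_eq : ∀ n j, t n ≤ j → j < t (n + 1) → idx j = n := by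
      intro n j h1 h2
      rcases lt_trichotomy (idx j) n with h | h | h
      · exact absurd h1 (Nat.findGreatest_is_greatest (P := fun k => t k ≤ j) h (le_trans (ht_ge n) h1))
      · exact h
      · exfalso
        have h3 : t (n + 1) ≤ t (idx j) := ht_mono.monotone h
        have h4 := hidx_le j
        omega
    set orb : ℕ → X := fun j => pf (a (idx j)) (j - t (idx j)) with horb
    have horb_t : ∀ n, orb (t n) = a n := by
      intro n
      have h := hidx_eq n (t n) le_rfl (ht_mono (Nat.lt_succ_self n))
      show pf (a (idx (t n))) (t n - t (idx (t n))) = a n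
      rw [h, Nat.sub_self]
      exact hp0 (a n) (haG n)
    have hstep_all : ∀ j, orb (j + 1) ∈ S (orb j) := by
      intro j
      have h1 : t (idx j) ≤ j := hidx_le j
      have h2 : j < t (idx j + 1) := hidx_lt j
      have h2' : j < t (idx j) + kf (a (idx j)) := by rwa [ht_succ] at h2
      have hd : j - t (idx j) < kf (a (idx j)) := by omega
      have hofj1 : orb (j + 1) = pf (a (idx j)) (j + 1 - t (idx j)) := by
        by_cases hc : j + 1 < t (idx j + 1)
        · have he := hidx_eq (idx j) (j + 1) (by omega) hc
          show pf (a (idx (j + 1))) (j + 1 - t (idx (j + 1))) = _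
          rw [he]
        · have hj1 : j + 1 = t (idx j + 1) := by omega
          rw [hj1, horb_t (idx j + 1), ha_succ (idx j)]
          congr 1
          rw [ht_succ] at hj1
          omega
      rw [hofj1]
      have hh := hpstep (a (idx j)) (haG (idx j)) (j - t (idx j)) hd
      have harith : j + 1 - t (idx j) = (j - t (idx j)) + 1 := by omega
      rw [harith]
      exact hh
    refine ⟨orb, ?_, hstep_all, ?_⟩
    · have h := horb_t 0
      rwa [ht0, ha0] at h
    · apply Set.infinite_of_injective_forall_mem (f := fun n : ℕ => t (n + 1))
      · intro n1 n2 h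
        exact Nat.succ_injective (ht_mono.injective h)
      · intro n
        simp only [Set.mem_setOf_eq]
        rw [horb_t (n + 1), ha_succ n]
        exact (hpend (a n) (haG n)).1
  have hnull : μ (B \ Good) = 0 := by
    refine measure_mono_null ?_ (measure_union_null hCsI.2 hNnull)
    rintro x ⟨hxB, hxG⟩
    by_cases hc : x ∈ Cs
    · refine Or.inr ?_
      by_contra hn
      exact hxG ⟨hc, hn⟩
    · exact Or.inl ⟨hxB, hc⟩
  rw [ae_iff]
  refine measure_mono_null (fun x hx => ?_) hnull
  simp only [Set.mem_setOf_eq, not_forall] at hx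
  obtain ⟨hxB, hxno⟩ := hx
  refine ⟨hxB, fun hxG => hxno ?_⟩
  exact hmain x hxG

end
end

section
/- (Poincaré recurrence for m-transformations) If S is a measure-preserving m-transformation on a probability space (X,𝓑,μ) and μ(B) > 0, then for almost every x ∈ B there is an orbit of x that returns to B infinitely often. -/
/-!
Let `D` be the set of points from which some path of positive length reaches `B`. Since
`fullPre S (B ∪ D) ⊆ D` and invariance gives `μ A ≤ μ (fullPre S A)`, the set `B \ D` is null.
Because every point has at most `m` images, `μ (fullPre S A) ≤ m μ A`, so the set `Z` of all
points reaching `B \ D` is null too, and `fullPre S Z ⊆ Z`. Hence from each point of `B \ Z`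
some path of positive length reaches `B \ Z` again, and chaining such paths gives the orbit.
-/

open MeasureTheory Set Filter Finset
open scoped ENNReal Classical

noncomputable section

namespace Function

theorem infinite_setOf_iterate_mem {α : Type*} (g : α → α) {V T : Set α} (φ : α → ℕ)
    (hV : MapsTo g V V) (hφ : ∀ a ∈ V \ T, φ (g a) < φ a) {a : α} (ha : a ∈ V) :
    {t | g^[t] a ∈ T}.Infinite := by
  have hvisit : ∀ k, ∀ b ∈ V, φ b = k → ∃ j, g^[j] b ∈ T := by
    intro k
    induction k using Nat.strong_induction_on with
    | _ k ih =>
      intro b hb hbk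
      by_cases hbT : b ∈ T
      · exact ⟨0, hbT⟩
      · obtain ⟨j, hj⟩ := ih _ (hbk ▸ hφ b ⟨hb, hbT⟩) (g b) (hV hb) rfl
        exact ⟨j + 1, by rwa [iterate_succ_apply]⟩
  refine Set.infinite_of_forall_exists_gt fun s => ?_
  obtain ⟨j, hj⟩ := hvisit _ (g^[s + 1] a) (hV.iterate (s + 1) ha) rfl
  exact ⟨j + (s + 1), by rwa [Set.mem_ofPred_eq, iterate_add_apply], by omega⟩

end Function

section FullPre

variable {X : Type*} (S : X → Finset X)

theorem fullPre_mono : Monotone (fullPre S) :=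
  fun _ _ h _ ⟨y, hy, hyA⟩ => ⟨y, hy, h hyA⟩

theorem fullPre_union (A A' : Set X) : fullPre S (A ∪ A') = fullPre S A ∪ fullPre S A' := by
  ext x
  simp only [fullPre, Set.mem_union, Set.mem_ofPred_eq]
  grind

theorem fullPre_iUnion {ι : Sort*} (A : ι → Set X) :
    fullPre S (⋃ i, A i) = ⋃ i, fullPre S (A i) := by
  ext x
  simp only [fullPre, Set.mem_iUnion, Set.mem_ofPred_eq]
  grind

theorem fullPre_iUnion_iterate_subset (A : Set X) :
    fullPre S (⋃ j, (fullPre S)^[j] A) ⊆ ⋃ j, (fullPre S)^[j] A := by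
  rw [fullPre_iUnion]
  refine Set.iUnion_subset fun j => ?_
  rw [← Function.iterate_succ_apply' (fullPre S) j A]
  exact Set.subset_iUnion (fun j => (fullPre S)^[j] A) (j + 1)

theorem iterate_fullPre_subset_diff_union {Z : Set X} (hZ : fullPre S Z ⊆ Z) (B : Set X) :
    ∀ n, (fullPre S)^[n] B ⊆ (fullPre S)^[n] (B \ Z) ∪ Z
  | 0 => by simp
  | n + 1 => by
    simp only [Function.iterate_succ_apply']
    calc fullPre S ((fullPre S)^[n] B)
        ⊆ fullPre S ((fullPre S)^[n] (B \ Z) ∪ Z) :=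
          fullPre_mono S (iterate_fullPre_subset_diff_union hZ B n)
      _ ⊆ fullPre S ((fullPre S)^[n] (B \ Z)) ∪ Z := by
          rw [fullPre_union]; exact Set.union_subset_union_right _ hZ

theorem exists_orbit_infinite_setOf_mem {C : Set X} (hC : C ⊆ ⋃ n, (fullPre S)^[n + 1] C)
    {x : X} (hx : x ∈ C) :
    ∃ orb : ℕ → X, orb 0 = x ∧ (∀ n, orb (n + 1) ∈ S (orb n)) ∧ {n | orb n ∈ C}.Infinite := by
  -- In a state `(y, k)` the orbit is at `y` and reaches `C` in `k` more steps.
  let V : Set (X × ℕ) := {p | p.1 ∈ (fullPre S)^[p.2] C}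
  have hstep : ∀ p ∈ V, ∃ q ∈ V, q.1 ∈ S p.1 ∧ (p.2 ≠ 0 → q.2 < p.2) := by
    rintro ⟨y, k⟩ hy
    obtain ⟨n, hn, hkn⟩ : ∃ n, y ∈ (fullPre S)^[n + 1] C ∧ (k ≠ 0 → n < k) := by
      cases k with
      | zero => simpa using hC hy
      | succ k => exact ⟨k, hy, fun _ => k.lt_succ_self⟩
    rw [Function.iterate_succ_apply'] at hn
    obtain ⟨z, hzS, hz⟩ := hn
    exact ⟨(z, n), hz, hzS, hkn⟩
  choose! g hgV hgS hg using hstep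
  have hV : MapsTo g V V := hgV
  refine ⟨fun t => (g^[t] (x, 0)).1, rfl, fun t => ?_, ?_⟩
  · show (g^[t + 1] (x, 0)).1 ∈ S (g^[t] (x, 0)).1
    rw [Function.iterate_succ_apply']
    exact hgS _ (hV.iterate t (show (x, 0) ∈ V from hx))
  · refine (Function.infinite_setOf_iterate_mem g (T := {p | p.2 = 0}) Prod.snd hV
      (fun p hp => hg p hp.1 hp.2) (show (x, 0) ∈ V from hx)).mono fun t ht => ?_
    have hmem : (g^[t] (x, 0)).1 ∈ (fullPre S)^[(g^[t] (x, 0)).2] C := hV.iterate t hx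
    rwa [show (g^[t] (x, 0)).2 = 0 from ht] at hmem

theorem fker_le_indicator_fullPre (A : Set X) (x : X) :
    fker S x A ≤ (fullPre S A).indicator 1 x := by
  by_cases hx : x ∈ fullPre S A
  · rw [Set.indicator_of_mem hx, Pi.one_apply]
    exact ENNReal.div_le_of_le_mul (by simpa using Finset.card_filter_le _ _)
  · have h : (S x).filter (· ∈ A) = ∅ :=
      Finset.filter_eq_empty_iff.mpr fun y hy hyA => hx ⟨y, hy, hyA⟩
    simp [fker, h]

theorem indicator_fullPre_le_mul_fker {m : ℕ} (hcard : ∀ x, (S x).card ≤ m) (A : Set X) (x : X) :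
    (fullPre S A).indicator 1 x ≤ m * fker S x A := by
  by_cases hx : x ∈ fullPre S A
  · have ⟨y, hy, hyA⟩ := hx
    have hl : 1 ≤ ((S x).filter (· ∈ A)).card :=
      Finset.card_pos.mpr ⟨y, Finset.mem_filter.mpr ⟨hy, hyA⟩⟩
    have hk : (S x).card ≠ 0 := Finset.card_ne_zero_of_mem hy
    rw [Set.indicator_of_mem hx, Pi.one_apply, fker, ← mul_div_assoc,
      ENNReal.le_div_iff_mul_le (by exact_mod_cast Or.inl hk) (Or.inl (ENNReal.natCast_ne_top _)),
      one_mul]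
    exact_mod_cast (hcard x).trans (Nat.le_mul_of_pos_right m hl)
  · rw [Set.indicator_of_notMem hx]
    exact zero_le

end FullPre

section Measure

variable {X : Type*} [MeasurableSpace X] {μ : Measure X} (S : X → Finset X)

def MeasurableMulti : Prop :=
  ∀ B : Set X, MeasurableSet B → ∀ k l : ℕ, MeasurableSet (preimKL S k l B)

def MeasurePreservingMulti (μ : Measure X) : Prop :=
  ∀ B : Set X, MeasurableSet B → ∫⁻ x, fker S x B ∂μ = μ B

theorem measurableSet_fullPre (hmeas : MeasurableMulti S) {A : Set X} (hA : MeasurableSet A) :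
    MeasurableSet (fullPre S A) := by
  have h : fullPre S A = ⋃ k, ⋃ l, preimKL S k (l + 1) A := by
    ext x
    simp only [fullPre, preimKL, Set.mem_iUnion, Set.mem_ofPred_eq]
    constructor
    · rintro ⟨y, hy, hyA⟩
      obtain ⟨l, hl⟩ := Nat.exists_eq_add_one.mpr
        (Finset.card_pos.mpr ⟨y, Finset.mem_filter.mpr ⟨hy, hyA⟩⟩)
      exact ⟨_, l, rfl, hl⟩
    · rintro ⟨k, l, -, hl⟩
      obtain ⟨y, hy⟩ := Finset.card_pos.mp
        (show 0 < ((S x).filter (· ∈ A)).card by rw [hl]; exact l.succ_pos)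
      exact ⟨y, Finset.mem_filter.mp hy⟩
  rw [h]
  exact MeasurableSet.iUnion fun k => MeasurableSet.iUnion fun l => hmeas A hA k (l + 1)

theorem measurableSet_iterate_fullPre (hmeas : MeasurableMulti S)
    {A : Set X} (hA : MeasurableSet A) : ∀ n, MeasurableSet ((fullPre S)^[n] A)
  | 0 => hA
  | n + 1 => by
    rw [Function.iterate_succ_apply']
    exact measurableSet_fullPre S hmeas (measurableSet_iterate_fullPre hmeas hA n)

theorem measure_le_measure_fullPre (hmeas : MeasurableMulti S)
    (hpres : MeasurePreservingMulti S μ) {A : Set X} (hA : MeasurableSet A) :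
    μ A ≤ μ (fullPre S A) :=
  calc μ A = ∫⁻ x, fker S x A ∂μ := (hpres A hA).symm
    _ ≤ ∫⁻ x, (fullPre S A).indicator 1 x ∂μ := lintegral_mono (fker_le_indicator_fullPre S A)
    _ = μ (fullPre S A) := lintegral_indicator_one (measurableSet_fullPre S hmeas hA)

theorem measure_fullPre_le_mul (hmeas : MeasurableMulti S)
    (hpres : MeasurePreservingMulti S μ) {m : ℕ} (hcard : ∀ x, (S x).card ≤ m) {A : Set X}
    (hA : MeasurableSet A) : μ (fullPre S A) ≤ m * μ A :=
  calc μ (fullPre S A) = ∫⁻ x, (fullPre S A).indicator 1 x ∂μ :=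
        (lintegral_indicator_one (measurableSet_fullPre S hmeas hA)).symm
    _ ≤ ∫⁻ x, m * fker S x A ∂μ := lintegral_mono (indicator_fullPre_le_mul_fker S hcard A)
    _ = m * μ A := by rw [lintegral_const_mul' _ _ (ENNReal.natCast_ne_top m), hpres A hA]

theorem measure_iterate_fullPre_eq_zero (hmeas : MeasurableMulti S)
    (hpres : MeasurePreservingMulti S μ) {m : ℕ} (hcard : ∀ x, (S x).card ≤ m) {A : Set X}
    (hA : MeasurableSet A) (hA0 : μ A = 0) : ∀ n, μ ((fullPre S)^[n] A) = 0
  | 0 => hA0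
  | n + 1 => by
    rw [Function.iterate_succ_apply']
    refine le_antisymm ?_ zero_le
    calc μ (fullPre S ((fullPre S)^[n] A))
        ≤ m * μ ((fullPre S)^[n] A) := measure_fullPre_le_mul S hmeas hpres hcard
          (measurableSet_iterate_fullPre S hmeas hA n)
      _ = 0 := by rw [measure_iterate_fullPre_eq_zero hmeas hpres hcard hA hA0 n, mul_zero]

theorem measure_diff_iUnion_iterate_fullPre_eq_zero [IsFiniteMeasure μ]
    (hmeas : MeasurableMulti S) (hpres : MeasurePreservingMulti S μ) {A : Set X}
    (hA : MeasurableSet A) : μ (A \ ⋃ n, (fullPre S)^[n + 1] A) = 0 := by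
  set D := ⋃ n, (fullPre S)^[n + 1] A
  have hD : MeasurableSet D :=
    MeasurableSet.iUnion fun n => measurableSet_iterate_fullPre S hmeas hA (n + 1)
  have hsub : fullPre S (A ∪ D) ⊆ D := by
    rw [fullPre_union, fullPre_iUnion]
    refine Set.union_subset (Set.subset_iUnion_of_subset 0 subset_rfl)
      (Set.iUnion_subset fun n => Set.subset_iUnion_of_subset (n + 1) ?_)
    rw [Function.iterate_succ_apply' _ (n + 1)]
  have hle : μ (A ∪ D) ≤ μ D :=
    (measure_le_measure_fullPre S hmeas hpres (hA.union hD)).trans (measure_mono hsub)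
  rw [← Set.union_sdiff_right, measure_sdiff Set.subset_union_right hD.nullMeasurableSet
    (measure_ne_top μ D)]
  exact tsub_eq_zero_of_le hle

end Measure

theorem poincare_recurrence_general {X : Type*} [MeasurableSpace X] (μ : Measure X)
    [IsProbabilityMeasure μ] (m : ℕ) (S : X → Finset X)
    (hcard : ∀ x, 1 ≤ (S x).card ∧ (S x).card ≤ m)
    (hmeas : ∀ B : Set X, MeasurableSet B → ∀ k l : ℕ, MeasurableSet (preimKL S k l B))
    (hpres : ∀ B : Set X, MeasurableSet B → ∫⁻ x, fker S x B ∂μ = μ B)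
    (B : Set X) (hB : MeasurableSet B) :
    ∀ᵐ x ∂μ, x ∈ B → ∃ orb : ℕ → X, orb 0 = x ∧ (∀ n, orb (n + 1) ∈ S (orb n)) ∧
        {n : ℕ | orb n ∈ B}.Infinite := by
  set B₀ := B \ ⋃ n, (fullPre S)^[n + 1] B
  have hB₀ : MeasurableSet B₀ :=
    hB.diff (MeasurableSet.iUnion fun n => measurableSet_iterate_fullPre S hmeas hB (n + 1))
  set Z := ⋃ j, (fullPre S)^[j] B₀
  have hZ : μ Z = 0 := measure_iUnion_null <|
    measure_iterate_fullPre_eq_zero S hmeas hpres (fun x => (hcard x).2) hB₀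
      (measure_diff_iUnion_iterate_fullPre_eq_zero S hmeas hpres hB)
  have hreturn : B \ Z ⊆ ⋃ n, (fullPre S)^[n + 1] (B \ Z) := by
    rintro x ⟨hxB, hxZ⟩
    obtain ⟨n, hn⟩ := Set.mem_iUnion.mp <|
      not_not.mp fun h => hxZ (Set.mem_iUnion_of_mem 0 ⟨hxB, h⟩)
    have := iterate_fullPre_subset_diff_union S (fullPre_iUnion_iterate_subset S B₀) B (n + 1) hn
    exact Set.mem_iUnion_of_mem n (this.resolve_right hxZ)
  filter_upwards [measure_eq_zero_iff_ae_notMem.mp hZ] with x hxZ hxB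
  obtain ⟨orb, h0, hstep, hinf⟩ := exists_orbit_infinite_setOf_mem S hreturn ⟨hxB, hxZ⟩
  exact ⟨orb, h0, hstep, hinf.mono fun n hn => hn.1⟩

/-- Poincaré recurrence for m-transformations: if `S` preserves `μ` and
`μ(B) > 0`, then a.e. point of `B` has an orbit returning to `B` infinitely often. -/
theorem poincare_recurrence {X : Type*} [MeasurableSpace X] (μ : Measure X)
    [IsProbabilityMeasure μ] (m : ℕ) (hm : 0 < m) (S : X → Finset X)
    (hcard : ∀ x, 1 ≤ (S x).card ∧ (S x).card ≤ m)
    (hmeas : ∀ B : Set X, MeasurableSet B → ∀ k l : ℕ, MeasurableSet (preimKL S k l B))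
    (hpres : ∀ B : Set X, MeasurableSet B → ∫⁻ x, fker S x B ∂μ = μ B)
    (B : Set X) (hB : MeasurableSet B) (hBpos : 0 < μ B) :
    ∀ᵐ x ∂μ, x ∈ B → ∃ orb : ℕ → X, orb 0 = x ∧ (∀ n, orb (n + 1) ∈ S (orb n)) ∧
        {n : ℕ | orb n ∈ B}.Infinite :=
  poincare_recurrence_general μ m S hcard hmeas hpres B hB
end
end

section
/- For any nonsingular m-transformation S, the following are equivalent: (1) for every B ∈ 𝓑 with B∖S⁻¹(B) = ∅ and B^c∖S⁻¹(B^c) = ∅, either μ(B) = 0 or μ(B^c) = 0; (2) for every B ∈ 𝓑 with μ(B∖S⁻¹(B)) = 0 and μ(B^c∖S⁻¹(B^c)) = 0, either μ(B) = 0 or μ(B^c) = 0; (3) for all disjoint B₁, B₂ ∈ 𝓑 with μ(B₁∖S⁻¹(B₁)) = 0 and μ(B₂∖S⁻¹(B₂)) = 0, either μ(B₁) = 0 or μ(B₂) = 0. -/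
open MeasureTheory Set Filter Finset
open scoped ENNReal Classical

noncomputable section

lemma fullPre_mono' {X : Type*} (S : X → Finset X) {A B : Set X} (h : A ⊆ B) :
    fullPre S A ⊆ fullPre S B := by
  rintro x ⟨y, hy, hyA⟩
  exact ⟨y, hy, h hyA⟩

lemma fullPre_measurable' {X : Type*} [MeasurableSpace X] (S : X → Finset X)
    (hmeas : ∀ B : Set X, MeasurableSet B → ∀ k l : ℕ, MeasurableSet (preimKL S k l B))
    {B : Set X} (hB : MeasurableSet B) : MeasurableSet (fullPre S B) := by
  have heq : fullPre S B = ⋃ k : ℕ, ⋃ l : ℕ, ⋃ _ : 0 < l, preimKL S k l B := by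
    ext x
    simp only [Set.mem_iUnion, fullPre, preimKL, Set.mem_setOf_eq]
    constructor
    · rintro ⟨y, hy, hyB⟩
      exact ⟨(S x).card, ((S x).filter (fun y => y ∈ B)).card,
        Finset.card_pos.mpr ⟨y, Finset.mem_filter.mpr ⟨hy, hyB⟩⟩, rfl, rfl⟩
    · rintro ⟨k, l, hl, hk, hlf⟩
      obtain ⟨y, hy⟩ := Finset.card_pos.mp (hlf ▸ hl)
      exact ⟨y, (Finset.mem_filter.mp hy).1, (Finset.mem_filter.mp hy).2⟩
  rw [heq]
  exact MeasurableSet.iUnion fun k => MeasurableSet.iUnion fun l =>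
    MeasurableSet.iUnion fun _ => hmeas B hB k l

/-- three equivalent characterizations of ergodicity of a nonsingular
m-transformation. -/
theorem ergodic_equivalent {X : Type*} [MeasurableSpace X] (μ : Measure X)
    [IsProbabilityMeasure μ] (m : ℕ) (hm : 0 < m) (S : X → Finset X)
    (hcard : ∀ x, 1 ≤ (S x).card ∧ (S x).card ≤ m)
    (hmeas : ∀ B : Set X, MeasurableSet B → ∀ k l : ℕ, MeasurableSet (preimKL S k l B))
    (hns : ∀ B : Set X, MeasurableSet B → μ B = 0 → μ (fullPre S B) = 0) :
    ((∀ B : Set X, MeasurableSet B → B \ fullPre S B = ∅ → Bᶜ \ fullPre S Bᶜ = ∅ →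
        μ B = 0 ∨ μ Bᶜ = 0) ↔
      (∀ B : Set X, MeasurableSet B → μ (B \ fullPre S B) = 0 →
        μ (Bᶜ \ fullPre S Bᶜ) = 0 → μ B = 0 ∨ μ Bᶜ = 0)) ∧
    ((∀ B : Set X, MeasurableSet B → μ (B \ fullPre S B) = 0 →
        μ (Bᶜ \ fullPre S Bᶜ) = 0 → μ B = 0 ∨ μ Bᶜ = 0) ↔
      (∀ B₁ B₂ : Set X, MeasurableSet B₁ → MeasurableSet B₂ → Disjoint B₁ B₂ →
        μ (B₁ \ fullPre S B₁) = 0 → μ (B₂ \ fullPre S B₂) = 0 →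
        μ B₁ = 0 ∨ μ B₂ = 0)) := by
  have hne : ∀ x, (S x).Nonempty := fun x => Finset.card_pos.mp (hcard x).1
  have hFm : ∀ {B : Set X}, MeasurableSet B → MeasurableSet (fullPre S B) :=
    fun hB => fullPre_measurable' S hmeas hB
  constructor
  · -- (1) ↔ (2)
    constructor
    · -- (1) → (2) : the hard direction
      intro h1 B hB hB1 hB2
      -- the defect set and its iterated preimages
      set N0 : Set X := (B \ fullPre S B) ∪ (Bᶜ \ fullPre S Bᶜ) with hN0def
      have hN0meas : MeasurableSet N0 :=
        ((hB.diff (hFm hB)).union (hB.compl.diff (hFm hB.compl)))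
      have hN0null : μ N0 = 0 :=
        measure_union_null hB1 hB2
      set Nseq : ℕ → Set X := fun n => (fullPre S)^[n] N0 with hNseqdef
      have hNseq_succ : ∀ n, Nseq (n + 1) = fullPre S (Nseq n) := fun n =>
        Function.iterate_succ_apply' (fullPre S) n N0
      have hNseq_prop : ∀ n, MeasurableSet (Nseq n) ∧ μ (Nseq n) = 0 := by
        intro n
        induction n with
        | zero => exact ⟨hN0meas, hN0null⟩
        | succ n ih =>
          rw [hNseq_succ]
          exact ⟨hFm ih.1, hns _ ih.1 ih.2⟩
      set N : Set X := ⋃ n, Nseq n with hNdef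
      have hNmeas : MeasurableSet N := MeasurableSet.iUnion fun n => (hNseq_prop n).1
      have hNnull : μ N = 0 := measure_iUnion_null fun n => (hNseq_prop n).2
      -- key: images of points outside N stay outside N
      have hNstep : ∀ x, x ∉ N → ∀ y ∈ S x, y ∉ N := by
        intro x hx y hy hyN
        obtain ⟨n, hn⟩ := Set.mem_iUnion.mp hyN
        exact hx (Set.mem_iUnion.mpr ⟨n + 1, by rw [hNseq_succ]; exact ⟨y, hy, hn⟩⟩)
      -- the modified set
      set M : Set X := B \ N with hMdef
      set E : ℕ → Set X := fun n => Nat.rec M (fun _ En => N ∩ fullPre S En) n with hEdef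
      have hE0 : E 0 = M := rfl
      have hEsucc : ∀ n, E (n + 1) = N ∩ fullPre S (E n) := fun n => rfl
      have hEmeas : ∀ n, MeasurableSet (E n) := by
        intro n
        induction n with
        | zero => exact hB.diff hNmeas
        | succ n ih => exact hNmeas.inter (hFm ih)
      set Bt : Set X := ⋃ n, E n with hBtdef
      have hBtmeas : MeasurableSet Bt := MeasurableSet.iUnion hEmeas
      -- Bt is exactly invariant
      have hBtinv : Bt \ fullPre S Bt = ∅ := by
        rw [Set.diff_eq_empty]
        intro x hx
        obtain ⟨n, hn⟩ := Set.mem_iUnion.mp hx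
        cases n with
        | zero =>
          have hxB : x ∈ B := hn.1
          have hxN : x ∉ N := hn.2
          have hxN0 : x ∉ N0 := fun h => hxN (Set.mem_iUnion.mpr ⟨0, h⟩)
          have hxpre : x ∈ fullPre S B := by
            by_contra hc
            exact hxN0 (Set.mem_union_left _ ⟨hxB, hc⟩)
          obtain ⟨y, hy, hyB⟩ := hxpre
          exact ⟨y, hy, Set.mem_iUnion.mpr ⟨0, ⟨hyB, hNstep x hxN y hy⟩⟩⟩
        | succ k =>
          obtain ⟨y, hy, hyE⟩ := hn.2
          exact ⟨y, hy, Set.mem_iUnion.mpr ⟨k, hyE⟩⟩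
      have hBtcinv : Btᶜ \ fullPre S Btᶜ = ∅ := by
        rw [Set.diff_eq_empty]
        intro x hx
        by_cases hxN : x ∈ N
        · -- if S x ⊆ Bt we derive a contradiction
          by_contra hc
          have hall : ∀ y ∈ S x, y ∈ Bt := by
            intro y hy
            by_contra hyc
            exact hc ⟨y, hy, hyc⟩
          obtain ⟨y, hy⟩ := hne x
          obtain ⟨n, hn⟩ := Set.mem_iUnion.mp (hall y hy)
          exact hx (Set.mem_iUnion.mpr ⟨n + 1, ⟨hxN, ⟨y, hy, hn⟩⟩⟩)
        · -- x ∉ N: then x ∈ Bᶜ, and an image in Bᶜ works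
          have hxB : x ∉ B := by
            intro hxB
            exact hx (Set.mem_iUnion.mpr ⟨0, ⟨hxB, hxN⟩⟩)
          have hxN0 : x ∉ N0 := fun h => hxN (Set.mem_iUnion.mpr ⟨0, h⟩)
          have hxpre : x ∈ fullPre S Bᶜ := by
            by_contra hcp
            exact hxN0 (Set.mem_union_right _ ⟨hxB, hcp⟩)
          obtain ⟨y, hy, hyBc⟩ := hxpre
          refine ⟨y, hy, ?_⟩
          intro hyBt
          obtain ⟨n, hn⟩ := Set.mem_iUnion.mp hyBt
          cases n with
          | zero => exact hyBc hn.1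
          | succ k => exact hNstep x hxN y hy hn.1
      -- measures agree
      have hBdiff : μ (B \ Bt) = 0 := by
        refine measure_mono_null (t := N) ?_ hNnull
        intro x hx
        by_contra hxN
        exact hx.2 (Set.mem_iUnion.mpr ⟨0, ⟨hx.1, hxN⟩⟩)
      have hBtdiff : μ (Bt \ B) = 0 := by
        refine measure_mono_null (t := N) ?_ hNnull
        intro x hx
        obtain ⟨n, hn⟩ := Set.mem_iUnion.mp hx.1
        cases n with
        | zero => exact absurd hn.1 hx.2
        | succ k => exact hn.1
      have hBeq : μ B = μ Bt := measure_congr (MeasureTheory.ae_eq_set.mpr ⟨hBdiff, hBtdiff⟩)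
      have hBceq : μ Bᶜ = μ Btᶜ := by
        apply measure_congr
        have := MeasureTheory.ae_eq_set.mpr ⟨hBdiff, hBtdiff⟩
        exact Filter.EventuallyEq.compl this
      rcases h1 Bt hBtmeas hBtinv hBtcinv with h | h
      · exact Or.inl (hBeq ▸ h)
      · exact Or.inr (hBceq ▸ h)
    · -- (2) → (1) : trivial
      intro h2 B hB h1e h2e
      exact h2 B hB (by rw [h1e]; exact measure_empty) (by rw [h2e]; exact measure_empty)
  · -- (2) ↔ (3)
    constructor
    · -- (2) → (3)
      intro h2 B1 B2 hB1 hB2 hdisj hB1inv hB2inv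
      set E : ℕ → Set X := fun n => Nat.rec B1 (fun _ En => fullPre S En \ B2) n with hEdef
      have hE0 : E 0 = B1 := rfl
      have hEsucc : ∀ n, E (n + 1) = fullPre S (E n) \ B2 := fun n => rfl
      have hEmeas : ∀ n, MeasurableSet (E n) := by
        intro n
        induction n with
        | zero => exact hB1
        | succ n ih => exact (hFm ih).diff hB2
      set C : Set X := ⋃ n, E n with hCdef
      have hCmeas : MeasurableSet C := MeasurableSet.iUnion hEmeas
      have hB1C : B1 ⊆ C := fun x hx => Set.mem_iUnion.mpr ⟨0, hx⟩
      have hB2C : B2 ⊆ Cᶜ := by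
        intro x hx hxC
        obtain ⟨n, hn⟩ := Set.mem_iUnion.mp hxC
        cases n with
        | zero => exact (Set.disjoint_left.mp hdisj hn) hx
        | succ k => exact hn.2 hx
      have hCinv : μ (C \ fullPre S C) = 0 := by
        refine measure_mono_null (t := B1 \ fullPre S B1) ?_ hB1inv
        intro x hx
        obtain ⟨n, hn⟩ := Set.mem_iUnion.mp hx.1
        cases n with
        | zero =>
          refine ⟨hn, fun hc => hx.2 ?_⟩
          exact fullPre_mono' S hB1C hc
        | succ k =>
          exact absurd (fullPre_mono' S (fun y hy => Set.mem_iUnion.mpr ⟨k, hy⟩) hn.1) hx.2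
      have hCcinv : μ (Cᶜ \ fullPre S Cᶜ) = 0 := by
        refine measure_mono_null (t := B2 \ fullPre S B2) ?_ hB2inv
        intro x hx
        have hxC : x ∉ C := hx.1
        have hxnp : x ∉ fullPre S Cᶜ := hx.2
        -- all images of x are in C
        have hall : ∀ y ∈ S x, y ∈ C := by
          intro y hy
          by_contra hyc
          exact hxnp ⟨y, hy, hyc⟩
        obtain ⟨y, hy⟩ := hne x
        obtain ⟨n, hn⟩ := Set.mem_iUnion.mp (hall y hy)
        have hxB2 : x ∈ B2 := by
          by_contra hxB2
          exact hxC (Set.mem_iUnion.mpr ⟨n + 1, ⟨⟨y, hy, hn⟩, hxB2⟩⟩)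
        exact ⟨hxB2, fun hc => hxnp (fullPre_mono' S hB2C hc)⟩
      rcases h2 C hCmeas hCinv hCcinv with h | h
      · exact Or.inl (measure_mono_null hB1C h)
      · exact Or.inr (measure_mono_null hB2C h)
    · -- (3) → (2) : trivial
      intro h3 B hB h1e h2e
      exact h3 B Bᶜ hB hB.compl disjoint_compl_right h1e h2e

end
end

section
/- The 2-transformation S : [0,1] → [0,1] given by S(x) = {2x, 1−2x} for x ∈ [0,1/2] and S(x) = {2x−1} for x ∈ (1/2,1] is ergodic with respect to Lebesgue measure: every Borel set B with B ⊆ S⁻¹(B) and B^c ⊆ S⁻¹(B^c) has λ(B) = 0 or λ(B^c) = 0. -/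
open MeasureTheory Set Filter Finset
open scoped ENNReal Classical

noncomputable section

/-!
Write `T` for the doubling map and `σ x = 1 - x`. On `[0, 1/2]` the transformation is
`S x = {T x, σ (T x)}`, elsewhere `S x = {T x}`, and `T ∘ σ = σ ∘ T` away from `1/2`. Hence if
`B ⊆ S⁻¹ B` then the symmetrisation `B ∪ σ⁻¹ B` is forward invariant under `T`, and if moreover
`C ⊆ S⁻¹ C` for the complement `C`, so is `G = B ∩ σ⁻¹ C`. Since `T` is ergodic (it is conjugate
to `y ↦ 2 • y` on the circle), such sets are null or conull. `G` and `σ⁻¹ G` are disjoint of equal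
measure, so `G` is null; and if `B ∪ σ⁻¹ B` is conull then `C` is covered by its complement and
`σ⁻¹ G`, so `C` is null.
-/

def doubling (x : ℝ) : ℝ := if x ≤ 1 / 2 then 2 * x else 2 * x - 1

lemma measurable_doubling : Measurable doubling :=
  Measurable.ite measurableSet_Iic (by fun_prop) (by fun_prop)

lemma doubling_mem_Ioc {x : ℝ} (hx : x ∈ Ioc (0 : ℝ) 1) : doubling x ∈ Ioc (0 : ℝ) 1 := by
  obtain ⟨h0, h1⟩ := hx
  unfold doubling
  split_ifs <;> constructor <;> linarith

lemma coe_doubling (x : ℝ) : (doubling x : UnitAddCircle) = 2 • (x : UnitAddCircle) := by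
  rw [← AddCircle.coe_nsmul, nsmul_eq_mul, Nat.cast_ofNat, doubling]
  split_ifs
  · rfl
  · rw [← AddCircle.coe_add_period (p := 1) (2 * x - 1), sub_add_cancel]

lemma doubling_one_sub {x : ℝ} (hx : x ≠ 1 / 2) : doubling (1 - x) = 1 - doubling x := by
  rcases hx.lt_or_gt with hx | hx
  · rw [doubling, doubling, if_neg (by linarith), if_pos hx.le]; ring
  · rw [doubling, doubling, if_pos (by linarith), if_neg (by linarith)]; ring

theorem ergodic_doubling : Ergodic doubling (volume.restrict (Icc (0 : ℝ) 1)) := by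
  set lift : UnitAddCircle → ℝ := fun y => AddCircle.equivIoc 1 0 y
  have hlift : MeasurePreserving lift volume (volume.restrict (Icc (0 : ℝ) 1)) := by
    rw [← Measure.restrict_congr_set Ioc_ae_eq_Icc]
    have h := (measurePreserving_subtype_coe measurableSet_Ioc).comp
      (AddCircle.measurePreserving_equivIoc 1 (a := 0))
    simp only [zero_add] at h
    exact h
  refine hlift.ergodic_of_ergodic_semiconj (AddCircle.ergodic_nsmul (n := 2) one_lt_two)
    measurable_doubling fun y => ?_
  have hy : lift y ∈ Ioc (0 : ℝ) 1 := by simpa using (AddCircle.equivIoc 1 0 y).2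
  show lift (2 • y) = doubling (lift y)
  conv_lhs => rw [← AddCircle.coe_equivIoc (a := 0) (y := y), ← coe_doubling]
  exact AddCircle.equivIoc_coe_of_mem (by simpa using doubling_mem_Ioc hy)

lemma volume_eq_zero_or_one_of_subset_preimage_doubling {A : Set ℝ} (hA : MeasurableSet A)
    (hA01 : A ⊆ Icc 0 1) (hinv : A ⊆ doubling ⁻¹' A) : volume A = 0 ∨ volume A = 1 := by
  have hμ : volume.restrict (Icc (0 : ℝ) 1) A = volume A := Measure.restrict_eq_self _ hA01
  rcases ergodic_doubling.ae_empty_or_univ_of_ae_le_preimage hA.nullMeasurableSet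
    (Eventually.of_forall hinv) with h | h
  · left
    rw [← hμ, measure_congr h, measure_empty]
  · right
    rw [← hμ, measure_congr h]
    simp

lemma union_reflect_subset_Icc {A : Set ℝ} (hA : A ⊆ Icc 0 1) :
    A ∪ (1 - ·) ⁻¹' A ⊆ Icc 0 1 := by
  refine union_subset hA fun x hx => ?_
  obtain ⟨h0, h1⟩ := hA hx
  constructor <;> linarith

lemma volume_eq_zero_of_disjoint_reflect {A : Set ℝ} (hA : MeasurableSet A)
    (hA01 : A ⊆ Icc 0 1) (hinv : A ⊆ doubling ⁻¹' A)
    (hdisj : Disjoint A ((1 - ·) ⁻¹' A)) : volume A = 0 := by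
  refine (volume_eq_zero_or_one_of_subset_preimage_doubling hA hA01 hinv).resolve_right
    fun h1 => ?_
  have hreflect : volume ((1 - ·) ⁻¹' A) = volume A :=
    (Measure.measurePreserving_sub_left volume 1).measure_preimage hA.nullMeasurableSet
  have := measure_mono (μ := volume) (union_reflect_subset_Icc hA01)
  rw [measure_union hdisj (measurable_const.sub measurable_id hA), hreflect, h1] at this
  norm_num at this

lemma doubling_mem_of_mem_fullPre {B : Set ℝ} {x : ℝ} (hx : x ∈ fullPre twoTransformation B) :
    doubling x ∈ B ∨ x ≤ 1 / 2 ∧ 1 - doubling x ∈ B := by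
  obtain ⟨y, hy, hyB⟩ := hx
  unfold twoTransformation at hy
  unfold doubling
  split_ifs at hy ⊢ with h
  · rcases Finset.mem_insert.mp hy with rfl | hy
    · exact .inl hyB
    · exact .inr ⟨h, by rwa [Finset.mem_singleton.mp hy] at hyB⟩
  · exact .inl (by rwa [Finset.mem_singleton.mp hy] at hyB)

lemma union_reflect_subset_preimage_doubling {B : Set ℝ}
    (hB : B ⊆ fullPre twoTransformation B) :
    B ∪ (1 - ·) ⁻¹' B ⊆ doubling ⁻¹' (B ∪ (1 - ·) ⁻¹' B) := by
  have hforward : ∀ x ∈ B, doubling x ∈ B ∪ (1 - ·) ⁻¹' B := fun x hx =>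
    (doubling_mem_of_mem_fullPre (hB hx)).imp id And.right
  rintro x (hx | hx)
  · exact hforward x hx
  · by_cases hhalf : x = 1 / 2
    · subst hhalf
      exact hforward _ (by norm_num at hx ⊢; exact hx)
    · have := hforward _ hx
      rw [doubling_one_sub hhalf] at this
      simpa [or_comm] using this

lemma inter_reflect_subset_preimage_doubling {B C : Set ℝ} (hBC : Disjoint B C)
    (hB : B ⊆ fullPre twoTransformation B) (hC : C ⊆ fullPre twoTransformation C) :
    B ∩ (1 - ·) ⁻¹' C ⊆ doubling ⁻¹' (B ∩ (1 - ·) ⁻¹' C) := by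
  rintro x ⟨hxB, hxC⟩
  have hhalf : x ≠ 1 / 2 := by
    rintro rfl
    exact hBC.notMem_of_mem_left hxB (by norm_num at hxC ⊢; exact hxC)
  have hC' := doubling_mem_of_mem_fullPre (hC hxC)
  simp only [doubling_one_sub hhalf, sub_sub_cancel] at hC'
  rcases doubling_mem_of_mem_fullPre (hB hxB) with hB' | ⟨hx, hB'⟩
  · rcases hC' with hC' | ⟨-, hC'⟩
    · exact ⟨hB', hC'⟩
    · exact absurd hC' (hBC.notMem_of_mem_left hB')
  · rcases hC' with hC' | ⟨hx', -⟩
    · exact absurd hC' (hBC.notMem_of_mem_left hB')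
    · exact absurd (le_antisymm hx (by linarith)) hhalf

/-- the 2-transformation `S(x) = {2x, 1-2x}` on `[0,1/2]`,
`S(x) = {2x-1}` on `(1/2,1]` is ergodic with respect to Lebesgue measure on `[0,1]`. -/
theorem ex2_ergodic :
    ∀ B : Set ℝ, MeasurableSet B → B ⊆ Set.Icc (0:ℝ) 1 →
      B ⊆ fullPre (fun x : ℝ =>
        if x ≤ 1/2 then ({2*x, 1 - 2*x} : Finset ℝ) else {2*x - 1}) B →
      Set.Icc (0:ℝ) 1 \ B ⊆ fullPre (fun x : ℝ =>
        if x ≤ 1/2 then ({2*x, 1 - 2*x} : Finset ℝ) else {2*x - 1})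
        (Set.Icc (0:ℝ) 1 \ B) →
      volume B = 0 ∨ volume (Set.Icc (0:ℝ) 1 \ B) = 0 := by
  intro B hB hB01 hBinv hCinv
  set C := Set.Icc (0 : ℝ) 1 \ B
  set Bsymm := B ∪ (1 - ·) ⁻¹' B
  have hreflect : MeasurePreserving (1 - · : ℝ → ℝ) volume volume :=
    Measure.measurePreserving_sub_left volume 1
  have hBsymm : MeasurableSet Bsymm := hB.union (hreflect.measurable hB)
  have hBC : Disjoint B C := disjoint_sdiff_right
  have hG : volume (B ∩ (1 - ·) ⁻¹' C) = 0 :=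
    volume_eq_zero_of_disjoint_reflect (hB.inter (hreflect.measurable (measurableSet_Icc.diff hB)))
      (inter_subset_left.trans hB01) (inter_reflect_subset_preimage_doubling hBC hBinv hCinv)
      (hBC.mono inter_subset_left fun x hx => by simpa using hx.2)
  rcases volume_eq_zero_or_one_of_subset_preimage_doubling hBsymm (union_reflect_subset_Icc hB01)
    (union_reflect_subset_preimage_doubling hBinv) with hB0 | hB1
  · exact .inl (measure_mono_null subset_union_left hB0)
  right
  have hcompl : volume (Set.Icc 0 1 \ Bsymm) = 0 := by
    rw [measure_sdiff (union_reflect_subset_Icc hB01) hBsymm.nullMeasurableSet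
      (hB1 ▸ ENNReal.one_ne_top), hB1]
    simp
  refine measure_mono_null (t := (Set.Icc 0 1 \ Bsymm) ∪ (1 - ·) ⁻¹' (B ∩ (1 - ·) ⁻¹' C))
    (fun x hx => ?_) (measure_union_null hcompl (hreflect.quasiMeasurePreserving.preimage_null hG))
  by_cases hxB : 1 - x ∈ B
  · exact .inr ⟨hxB, by simpa using hx⟩
  · exact .inl ⟨hx.1, by rintro (h | h) <;> simp_all [C]⟩
end
end

section
/- If S is an ergodic nonsingular m-transformation and f is a measurable function with (Uf)(x) = f(x) for almost all x, then f is constant almost everywhere. -/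
open MeasureTheory Set Filter Finset
open scoped ENNReal Classical

noncomputable section

/-!
For each `c`, the superlevel set `A = {c ≤ f}` is invariant off the null set where `Uf ≠ f`:
as `f x` is the average of `f` over `S x`, a point of `A` has an image in `A` and a point
outside `A` has an image outside `A`. By nonsingularity that null set lies in a null set `M`
with `S⁻¹(M) ⊆ M`, so paths starting outside `M` never enter it. Redefining `A` on `M` as the
set of points from which `A \ M` is reachable through `M` gives a set `B =ᵐ A` with
`B ⊆ S⁻¹(B)` and `Bᶜ ⊆ S⁻¹(Bᶜ)`, which ergodicity forces to be null or conull. A real function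
all of whose superlevel sets are null or conull is a.e. constant.
-/

section MultivaluedMap

variable {X : Type*} (S : X → Finset X)

lemma fullPre_eq_iUnion_preimKL (B : Set X) :
    fullPre S B = ⋃ (k : ℕ) (l : ℕ), preimKL S k (l + 1) B := by
  ext x
  simp only [fullPre, preimKL, Set.mem_ofPred_eq, Set.mem_iUnion, exists_and_left, exists_eq_left',
    Nat.exists_eq_add_one, Finset.card_pos, Finset.filter_nonempty_iff]

lemma measurableSet_fullPre_s18 [MeasurableSpace X]
    (hmeas : ∀ B : Set X, MeasurableSet B → ∀ k l : ℕ, MeasurableSet (preimKL S k l B))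
    {B : Set X} (hB : MeasurableSet B) : MeasurableSet (fullPre S B) := by
  rw [fullPre_eq_iUnion_preimKL]
  exact .iUnion fun k => .iUnion fun l => hmeas B hB k (l + 1)

lemma exists_mem_le_of_le_koop {f : X → ℝ} {x : X} (hx : (S x).Nonempty) {c : ℝ}
    (hc : c ≤ koop S f x) : ∃ y ∈ S x, c ≤ f y := by
  have hpos : (0 : ℝ) < (S x).card := by exact_mod_cast hx.card_pos
  refine Finset.exists_le_of_sum_le hx ?_
  rwa [Finset.sum_const, nsmul_eq_mul, mul_comm, ← le_div_iff₀ hpos]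

lemma exists_mem_lt_of_koop_lt {f : X → ℝ} {x : X} (hx : (S x).Nonempty) {c : ℝ}
    (hc : koop S f x < c) : ∃ y ∈ S x, f y < c := by
  have hpos : (0 : ℝ) < (S x).card := by exact_mod_cast hx.card_pos
  refine Finset.exists_lt_of_sum_lt ?_
  rwa [Finset.sum_const, nsmul_eq_mul, mul_comm, ← div_lt_iff₀ hpos]

/-- The points `x₀` admitting a path `x₀ → x₁ → ⋯ → xₙ ∈ C` along `S` with `x₀, …, xₙ₋₁ ∈ M`. -/
def reachWithin (M C : Set X) : Set X :=
  ⋃ n : ℕ, (fun T => M ∩ fullPre S T)^[n] C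

lemma subset_reachWithin (M C : Set X) : C ⊆ reachWithin S M C :=
  Set.subset_iUnion_of_subset 0 subset_rfl

lemma inter_fullPre_reachWithin_subset (M C : Set X) :
    M ∩ fullPre S (reachWithin S M C) ⊆ reachWithin S M C := by
  rintro x ⟨hxM, y, hyS, hy⟩
  obtain ⟨n, hn⟩ := Set.mem_iUnion.mp hy
  refine Set.mem_iUnion.mpr ⟨n + 1, ?_⟩
  rw [Function.iterate_succ_apply']
  exact ⟨hxM, y, hyS, hn⟩

lemma reachWithin_subset (M C : Set X) :
    reachWithin S M C ⊆ C ∪ (M ∩ fullPre S (reachWithin S M C)) := by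
  intro x hx
  obtain ⟨n, hn⟩ := Set.mem_iUnion.mp hx
  cases n with
  | zero => exact Or.inl hn
  | succ n =>
    rw [Function.iterate_succ_apply'] at hn
    obtain ⟨hxM, y, hyS, hy⟩ := hn
    exact Or.inr ⟨hxM, y, hyS, Set.mem_iUnion.mpr ⟨n, hy⟩⟩

section Measure

variable [MeasurableSpace X]

lemma measurableSet_iterate_inter_fullPre
    (hmeas : ∀ B : Set X, MeasurableSet B → ∀ k l : ℕ, MeasurableSet (preimKL S k l B))
    {M C : Set X} (hM : MeasurableSet M) (hC : MeasurableSet C) (n : ℕ) :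
    MeasurableSet ((fun T => M ∩ fullPre S T)^[n] C) := by
  induction n with
  | zero => exact hC
  | succ n ih =>
    rw [Function.iterate_succ_apply']
    exact hM.inter (measurableSet_fullPre_s18 S hmeas ih)

lemma measurableSet_reachWithin
    (hmeas : ∀ B : Set X, MeasurableSet B → ∀ k l : ℕ, MeasurableSet (preimKL S k l B))
    {M C : Set X} (hM : MeasurableSet M) (hC : MeasurableSet C) :
    MeasurableSet (reachWithin S M C) :=
  .iUnion (measurableSet_iterate_inter_fullPre S hmeas hM hC)

lemma measure_reachWithin_eq_zero {μ : Measure X}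
    (hmeas : ∀ B : Set X, MeasurableSet B → ∀ k l : ℕ, MeasurableSet (preimKL S k l B))
    (hns : ∀ B : Set X, MeasurableSet B → μ B = 0 → μ (fullPre S B) = 0)
    {M C : Set X} (hM : MeasurableSet M) (hC : MeasurableSet C) (hC₀ : μ C = 0) :
    μ (reachWithin S M C) = 0 := by
  refine measure_iUnion_null fun n => ?_
  induction n with
  | zero => exact hC₀
  | succ n ih =>
    rw [Function.iterate_succ_apply']
    exact measure_mono_null Set.inter_subset_right
      (hns _ (measurableSet_iterate_inter_fullPre S hmeas hM hC n) ih)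

end Measure

end MultivaluedMap

section Invariance

variable {X : Type*} (S : X → Finset X) {M A : Set X}

lemma reachWithin_diff_subset_fullPre (hMS : fullPre S M ⊆ M)
    (hA : ∀ x ∉ M, x ∈ A → x ∈ fullPre S A) :
    reachWithin S M (A \ M) ⊆ fullPre S (reachWithin S M (A \ M)) := by
  intro x hx
  rcases reachWithin_subset S M _ hx with ⟨hxA, hxM⟩ | ⟨-, hx'⟩
  · obtain ⟨y, hyS, hyA⟩ := hA x hxM hxA
    exact ⟨y, hyS, subset_reachWithin S M _ ⟨hyA, fun hyM => hxM (hMS ⟨y, hyS, hyM⟩)⟩⟩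
  · exact hx'

lemma compl_reachWithin_diff_subset_fullPre_compl (hS : ∀ x, (S x).Nonempty)
    (hMS : fullPre S M ⊆ M) (hA : ∀ x ∉ M, x ∉ A → x ∈ fullPre S Aᶜ) :
    (reachWithin S M (A \ M))ᶜ ⊆ fullPre S (reachWithin S M (A \ M))ᶜ := by
  intro x hx
  by_cases hxM : x ∈ M
  · obtain ⟨y, hyS⟩ := hS x
    exact ⟨y, hyS, fun hy => hx (inter_fullPre_reachWithin_subset S M _ ⟨hxM, y, hyS, hy⟩)⟩
  · have hxA : x ∉ A := fun hxA => hx (subset_reachWithin S M _ ⟨hxA, hxM⟩)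
    obtain ⟨y, hyS, hyA⟩ := hA x hxM hxA
    have hyM : y ∉ M := fun hyM => hxM (hMS ⟨y, hyS, hyM⟩)
    refine ⟨y, hyS, fun hy => ?_⟩
    rcases reachWithin_subset S M _ hy with ⟨hyA', -⟩ | ⟨hyM', -⟩
    exacts [hyA hyA', hyM hyM']

lemma mem_reachWithin_diff_iff {x : X} (hx : x ∉ M) :
    x ∈ reachWithin S M (A \ M) ↔ x ∈ A := by
  refine ⟨fun h => ?_, fun h => subset_reachWithin S M _ ⟨h, hx⟩⟩
  rcases reachWithin_subset S M _ h with ⟨hxA, -⟩ | ⟨hxM, -⟩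
  exacts [hxA, absurd hxM hx]

variable [MeasurableSpace X] {μ : Measure X}

lemma exists_null_superset_fullPre_subset
    (hmeas : ∀ B : Set X, MeasurableSet B → ∀ k l : ℕ, MeasurableSet (preimKL S k l B))
    (hns : ∀ B : Set X, MeasurableSet B → μ B = 0 → μ (fullPre S B) = 0)
    {N : Set X} (hN : μ N = 0) :
    ∃ M, N ⊆ M ∧ MeasurableSet M ∧ μ M = 0 ∧ fullPre S M ⊆ M := by
  obtain ⟨N', hNN', hN'm, hN'₀⟩ := exists_measurable_superset_of_null hN
  refine ⟨reachWithin S univ N', hNN'.trans (subset_reachWithin S univ N'),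
    measurableSet_reachWithin S hmeas .univ hN'm,
    measure_reachWithin_eq_zero S hmeas hns .univ hN'm hN'₀, ?_⟩
  simpa using inter_fullPre_reachWithin_subset S univ N'

lemma exists_invariant_ae_eq (hS : ∀ x, (S x).Nonempty)
    (hmeas : ∀ B : Set X, MeasurableSet B → ∀ k l : ℕ, MeasurableSet (preimKL S k l B))
    (hns : ∀ B : Set X, MeasurableSet B → μ B = 0 → μ (fullPre S B) = 0)
    (hAm : MeasurableSet A)
    (hA : ∀ᵐ x ∂μ, (x ∈ A → x ∈ fullPre S A) ∧ (x ∉ A → x ∈ fullPre S Aᶜ)) :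
    ∃ B, MeasurableSet B ∧ B ⊆ fullPre S B ∧ Bᶜ ⊆ fullPre S Bᶜ ∧ B =ᵐ[μ] A := by
  obtain ⟨M, hNM, hMm, hM₀, hMS⟩ := exists_null_superset_fullPre_subset S hmeas hns (ae_iff.mp hA)
  have hA' : ∀ x ∉ M, (x ∈ A → x ∈ fullPre S A) ∧ (x ∉ A → x ∈ fullPre S Aᶜ) :=
    fun x hx => not_not.mp fun h => hx (hNM h)
  exact ⟨reachWithin S M (A \ M), measurableSet_reachWithin S hmeas hMm (hAm.diff hMm),
    reachWithin_diff_subset_fullPre S hMS fun x hx => (hA' x hx).1,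
    compl_reachWithin_diff_subset_fullPre_compl S hS hMS fun x hx => (hA' x hx).2,
    eventuallyEq_set.mpr ((measure_eq_zero_iff_ae_notMem.mp hM₀).mono
      fun x hx => mem_reachWithin_diff_iff S hx)⟩

lemma ae_mem_or_ae_notMem_of_ae_invariant (hS : ∀ x, (S x).Nonempty)
    (hmeas : ∀ B : Set X, MeasurableSet B → ∀ k l : ℕ, MeasurableSet (preimKL S k l B))
    (hns : ∀ B : Set X, MeasurableSet B → μ B = 0 → μ (fullPre S B) = 0)
    (herg : ∀ B : Set X, MeasurableSet B → B \ fullPre S B = ∅ → Bᶜ \ fullPre S Bᶜ = ∅ →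
      μ B = 0 ∨ μ Bᶜ = 0)
    (hAm : MeasurableSet A)
    (hA : ∀ᵐ x ∂μ, (x ∈ A → x ∈ fullPre S A) ∧ (x ∉ A → x ∈ fullPre S Aᶜ)) :
    (∀ᵐ x ∂μ, x ∈ A) ∨ ∀ᵐ x ∂μ, x ∉ A := by
  obtain ⟨B, hBm, hB, hBc, hBA⟩ := exists_invariant_ae_eq S hS hmeas hns hAm hA
  rcases herg B hBm (sdiff_eq_empty.mpr hB) (sdiff_eq_empty.mpr hBc) with h | h
  · exact .inr (measure_eq_zero_iff_ae_notMem.mp ((measure_congr hBA).symm.trans h))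
  · exact .inl (mem_ae_iff.mpr ((measure_congr hBA.compl).symm.trans h))

end Invariance

theorem ergodic_invariant_const_general {X : Type*} [MeasurableSpace X] (μ : Measure X)
    (m : ℕ) (S : X → Finset X)
    (hcard : ∀ x, 1 ≤ (S x).card ∧ (S x).card ≤ m)
    (hmeas : ∀ B : Set X, MeasurableSet B → ∀ k l : ℕ, MeasurableSet (preimKL S k l B))
    (hns : ∀ B : Set X, MeasurableSet B → μ B = 0 → μ (fullPre S B) = 0)
    (herg : ∀ B : Set X, MeasurableSet B → B \ fullPre S B = ∅ → Bᶜ \ fullPre S Bᶜ = ∅ →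
      μ B = 0 ∨ μ Bᶜ = 0)
    (f : X → ℝ) (hf : Measurable f) (hUf : ∀ᵐ x ∂μ, koop S f x = f x) :
    ∃ c : ℝ, ∀ᵐ x ∂μ, f x = c := by
  have hS : ∀ x, (S x).Nonempty := fun x => Finset.card_pos.mp (hcard x).1
  refine exists_eventuallyEq_const_of_forall_separating (· ∈ Set.range (Set.Ici : ℝ → Set ℝ)) ?_
  rintro _ ⟨c, rfl⟩
  refine ae_mem_or_ae_notMem_of_ae_invariant S hS hmeas hns herg (hf measurableSet_Ici) ?_
  filter_upwards [hUf] with x hx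
  constructor
  · intro hxc
    exact exists_mem_le_of_le_koop S (hS x) (hx ▸ hxc : c ≤ koop S f x)
  · intro hxc
    obtain ⟨y, hyS, hyc⟩ := exists_mem_lt_of_koop_lt S (hS x) (hx ▸ not_le.mp hxc : koop S f x < c)
    exact ⟨y, hyS, hyc.not_ge⟩

/-- if `S` is an ergodic nonsingular m-transformation and `Uf = f` a.e.
for a measurable `f`, then `f` is constant a.e. -/
theorem ergodic_invariant_const {X : Type*} [MeasurableSpace X] (μ : Measure X)
    [IsProbabilityMeasure μ] (m : ℕ) (hm : 0 < m) (S : X → Finset X)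
    (hcard : ∀ x, 1 ≤ (S x).card ∧ (S x).card ≤ m)
    (hmeas : ∀ B : Set X, MeasurableSet B → ∀ k l : ℕ, MeasurableSet (preimKL S k l B))
    (hns : ∀ B : Set X, MeasurableSet B → μ B = 0 → μ (fullPre S B) = 0)
    (herg : ∀ B : Set X, MeasurableSet B → B \ fullPre S B = ∅ → Bᶜ \ fullPre S Bᶜ = ∅ →
      μ B = 0 ∨ μ Bᶜ = 0)
    (f : X → ℝ) (hf : Measurable f) (hUf : ∀ᵐ x ∂μ, koop S f x = f x) :
    ∃ c : ℝ, ∀ᵐ x ∂μ, f x = c :=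
  ergodic_invariant_const_general μ m S hcard hmeas hns herg f hf hUf
end
end
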